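/- arXiv:1711.07872 — 13 statements merged into one kernel-verified Lean document; each statement's English description precedes it below -/
import Mathlib

section
/- Let H be a finite simple connected graph on h ≥ 1 vertices. Then the sum, over all vertex covers C of H, of 2^{comp(H[C])} is at most 3 · 2^{h−1}, where H[C] denotes the subgraph of H induced by C and comp denotes the number of connected components of a graph (with the convention that the empty graph has 0 components). -/
/-!
A vertex cover `C` together with a bit for each component of `H[C]` is the same thing as a
labelling `f : V → Option Bool` (`none` off `C`, the bit of its component on `C`) such that no edge
joins two `none`s and adjacent labelled vertices carry equal bits. So the sum counts these
labellings. Given the label of a vertex, each neighbour has only two admissible labels; fixing a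
root and a neighbour closer to it for every other vertex, a labelling is thus determined by the
root's label (three choices) and one bit per remaining vertex.
-/

open Finset

theorem Finset.exists_injOn_lt_card {α : Type*} (s : Finset α) :
    ∃ c : α → ℕ, Set.InjOn c s ∧ ∀ b ∈ s, c b < #s := by
  classical
  refine ⟨fun b => if h : b ∈ s then s.equivFin ⟨b, h⟩ else 0, ?_, fun b hb => by simp [hb]⟩
  intro a ha b hb hab
  simp only [mem_coe] at ha hb
  simpa [ha, hb, Fin.val_inj] using hab

def CoverCompatible : Option Bool → Option Bool → Prop
  | none, none => False
  | some a, some b => a = b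
  | _, _ => True

instance : DecidableRel CoverCompatible := fun a b => by
  cases a <;> cases b <;> unfold CoverCompatible <;> infer_instance

theorem card_coverCompatible_le_two (x : Option Bool) : #{y | CoverCompatible x y} ≤ 2 := by
  revert x; decide

theorem CoverCompatible.isSome_or_isSome :
    ∀ {x y : Option Bool}, CoverCompatible x y → x.isSome ∨ y.isSome := by
  decide

theorem CoverCompatible.eq_of_isSome :
    ∀ {x y : Option Bool}, CoverCompatible x y → x.isSome → y.isSome → x = y := by
  decide

namespace SimpleGraph

variable {V α : Type*} {G : SimpleGraph V}

theorem Reachable.eq_of_forall_adj_eq {β : Sort*} {f : V → β}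
    (hf : ∀ u v, G.Adj u v → f u = f v) {u v : V} (h : G.Reachable u v) : f u = f v := by
  rw [reachable_iff_reflTransGen] at h
  induction h with
  | refl => rfl
  | tail _ hadj ih => exact ih.trans (hf _ _ hadj)

theorem Connected.exists_adj_dist_lt (hG : G.Connected) {v₀ v : V} (hv : v ≠ v₀) :
    ∃ u, G.Adj u v ∧ G.dist v₀ u < G.dist v₀ v := by
  obtain ⟨p, hp⟩ := hG.exists_walk_length_eq_dist v v₀
  cases p with
  | nil => exact absurd rfl hv
  | @cons _ u _ hadj q =>
    refine ⟨u, hadj.symm, ?_⟩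
    have := dist_le q
    rw [Walk.length_cons] at hp
    rw [dist_comm, @dist_comm _ _ v₀ v]
    omega

theorem Connected.card_forall_adj_rel_le [Fintype V] [DecidableEq V] [DecidableRel G.Adj]
    [Fintype α] [DecidableEq α] (hG : G.Connected) (R : α → α → Prop) [DecidableRel R] {k : ℕ}
    (hR : ∀ a, #{b | R a b} ≤ k) :
    #{f : V → α | ∀ u v, G.Adj u v → R (f u) (f v)} ≤ Fintype.card α * k ^ (Fintype.card V - 1) := by
  obtain ⟨v₀⟩ := hG.nonempty
  choose parent hadj hlt using fun v (hv : v ≠ v₀) => hG.exists_adj_dist_lt hv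
  choose c hc_inj hc_lt using fun a => exists_injOn_lt_card ({b | R a b} : Finset α)
  -- `c a` ranks the `R`-successors of `a` below `k`
  let code (f : V → α) : α × ({v // v ≠ v₀} → ℕ) :=
    (f v₀, fun v => c (f (parent v v.2)) (f v))
  have hcode : Set.InjOn code {f | ∀ u v, G.Adj u v → R (f u) (f v)} := by
    intro f hf g hg hfg
    simp only [Set.mem_ofPred_eq, code, Prod.mk.injEq, funext_iff] at hf hg hfg
    suffices ∀ n v, G.dist v₀ v = n → f v = g v from funext fun v => this _ v rfl
    intro n
    induction n using Nat.strong_induction_on with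
    | _ n ih =>
      rintro v rfl
      by_cases hv : v = v₀
      · exact hv ▸ hfg.1
      have hpar : f (parent v hv) = g (parent v hv) := ih _ (hlt v hv) _ rfl
      have hfv : R (f (parent v hv)) (f v) := hf _ _ (hadj v hv)
      have hgv : R (f (parent v hv)) (g v) := hpar ▸ hg _ _ (hadj v hv)
      exact hc_inj _ (by simpa using hfv) (by simpa using hgv) (by simpa [hpar] using hfg.2 ⟨v, hv⟩)
  calc _ ≤ #(univ ×ˢ Fintype.piFinset fun _ : {v // v ≠ v₀} => range k) := by
        refine card_le_card_of_injOn code (fun f hf => ?_) (by simpa using hcode)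
        rw [mem_coe, mem_filter] at hf
        simp only [mem_coe, mem_product, mem_univ, true_and, Fintype.mem_piFinset, mem_range]
        exact fun v => (hc_lt _ _ (by simpa using hf.2 _ _ (hadj v v.2))).trans_le (hR _)
    _ = Fintype.card α * k ^ (Fintype.card V - 1) := by
        rw [card_product, card_univ, Fintype.card_piFinset, prod_const, card_range, card_univ, Fintype.card_subtype_compl, Fintype.card_subtype_eq]

variable [Fintype V] [DecidableEq V] [DecidableRel G.Adj]

def coverColoringEquiv (C : Finset V) (hC : ∀ u v, G.Adj u v → u ∈ C ∨ v ∈ C) :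
    ((G.induce (C : Set V)).ConnectedComponent → Bool) ≃
      {f : V → Option Bool // (∀ u v, G.Adj u v → CoverCompatible (f u) (f v)) ∧
        ∀ v, (f v).isSome ↔ v ∈ C} where
  toFun g := ⟨fun v => if h : v ∈ C then some (g ((G.induce _).connectedComponentMk ⟨v, h⟩))
      else none, by
    refine ⟨fun u v huv => ?_, fun v => by by_cases hv : v ∈ C <;> simp [hv]⟩
    by_cases hu : u ∈ C <;> by_cases hv : v ∈ C
    · simp only [hu, hv, dite_true, CoverCompatible]
      exact congrArg g (ConnectedComponent.connectedComponentMk_eq_of_adj (by simpa using huv))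
    · simp [hu, hv, CoverCompatible]
    · simp [hu, hv, CoverCompatible]
    · exact ((hC u v huv).elim hu hv).elim⟩
  invFun f := ConnectedComponent.lift (fun x => (f.1 x).getD false) fun _ _ p _ =>
    p.reachable.eq_of_forall_adj_eq (f := fun x : C => (f.1 x).getD false) fun x y hxy => by
      have hxy' : G.Adj x y := by simpa using hxy
      rw [f.2.1 x y hxy' |>.eq_of_isSome ((f.2.2 x).2 x.2) ((f.2.2 y).2 y.2)]
  left_inv g := by
    ext K
    induction K using ConnectedComponent.ind with
    | h x => simp
  right_inv f := by
    ext1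
    funext v
    by_cases hv : v ∈ C
    · obtain ⟨b, hb⟩ := Option.isSome_iff_exists.1 ((f.2.2 v).2 hv)
      show dite _ _ _ = _
      rw [dif_pos hv]
      show some ((f.1 v).getD false) = f.1 v
      rw [hb]
      rfl
    · show dite _ _ _ = _
      rw [dif_neg hv]
      exact (Option.not_isSome_iff_eq_none.1 (mt (f.2.2 v).1 hv)).symm

theorem sum_two_pow_card_connectedComponent_induce_eq :
    ∑ C ∈ univ.filter (fun C : Finset V => ∀ u v, G.Adj u v → u ∈ C ∨ v ∈ C),
      2 ^ Nat.card (G.induce (C : Set V)).ConnectedComponent =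
    #{f : V → Option Bool | ∀ u v, G.Adj u v → CoverCompatible (f u) (f v)} := by
  rw [card_eq_sum_card_fiberwise (f := fun f => univ.filter fun v => (f v).isSome)
    (t := univ.filter fun C : Finset V => ∀ u v, G.Adj u v → u ∈ C ∨ v ∈ C) fun f hf => by
      simp only [coe_filter, mem_univ, true_and, Set.mem_ofPred_eq] at hf ⊢
      simpa using fun u v huv => (hf u v huv).isSome_or_isSome]
  refine sum_congr rfl fun C hC => ?_
  rw [mem_filter] at hC
  calc 2 ^ Nat.card (G.induce (C : Set V)).ConnectedComponent
      = Nat.card ((G.induce (C : Set V)).ConnectedComponent → Bool) := by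
        rw [Nat.card_fun, Nat.card_eq_fintype_card (α := Bool), Fintype.card_bool]
    _ = Nat.card {f : V → Option Bool // (∀ u v, G.Adj u v → CoverCompatible (f u) (f v)) ∧
          ∀ v, (f v).isSome ↔ v ∈ C} := Nat.card_congr (coverColoringEquiv C hC.2)
    _ = _ := by
      rw [filter_filter, Nat.card_eq_fintype_card, Fintype.card_subtype]
      simp [Finset.ext_iff]

end SimpleGraph

theorem stmt_0_general {V : Type*} [Fintype V] [DecidableEq V]
    (H : SimpleGraph V) [DecidableRel H.Adj]
    (hconn : H.Connected) :
    ∑ C ∈ Finset.univ.filter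
        (fun C : Finset V => ∀ u v : V, H.Adj u v → u ∈ C ∨ v ∈ C),
      2 ^ Nat.card (H.induce (↑C : Set V)).ConnectedComponent
      ≤ 3 * 2 ^ (Fintype.card V - 1) := by
  rw [SimpleGraph.sum_two_pow_card_connectedComponent_induce_eq]
  exact hconn.card_forall_adj_rel_le _ card_coverCompatible_le_two

/-- Let H be a finite simple connected graph on h ≥ 1 vertices. Then the
sum, over all vertex covers C of H, of `2 ^ comp (H[C])` is at most `3 · 2 ^ (h - 1)`,
where `comp` counts connected components (the empty graph has 0 components). -/
theorem stmt_0 {V : Type*} [Fintype V] [DecidableEq V]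
    (H : SimpleGraph V) [DecidableRel H.Adj]
    (hconn : H.Connected) (hcard : 1 ≤ Fintype.card V) :
    ∑ C ∈ Finset.univ.filter
        (fun C : Finset V => ∀ u v : V, H.Adj u v → u ∈ C ∨ v ∈ C),
      2 ^ Nat.card (H.induce (↑C : Set V)).ConnectedComponent
      ≤ 3 * 2 ^ (Fintype.card V - 1) :=
  stmt_0_general H hconn
end

section
/- Let G be a finite simple connected graph and let T be a nonempty vertex cover of G such that the induced subgraph G[T] has exactly t connected components. Then G has a connected vertex cover T' with T ⊆ T' and |T'| ≤ |T| + t − 1. -/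
/-!
Adding to a vertex cover `T` an outside vertex `w` adjacent to two different components of
`G[T]` costs one vertex and lowers the number of components. Such a `w` exists as long as
`G[T]` is disconnected: since `T` covers every edge, no two consecutive vertices of a walk in `G`
lie outside `T`, so a walk between two vertices of `T` can pass from one component of `G[T]` to
another only through a single outside vertex. After at most `t - 1` such steps the cover is
connected.
-/

/-- A set of vertices is a vertex cover if every edge has at least one endpoint in it. -/
def IsVertexCover {V : Type*} (G : SimpleGraph V) (X : Set V) : Prop :=
  ∀ ⦃u v : V⦄, G.Adj u v → u ∈ X ∨ v ∈ X

section

open SimpleGraph hiding IsVertexCover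

variable {V : Type*} {G : SimpleGraph V} {T : Set V}

lemma IsVertexCover.mono {T' : Set V} (h : T ⊆ T') (hcov : IsVertexCover G T) :
    IsVertexCover G T' :=
  fun _ _ huv => (hcov huv).imp (@h _) (@h _)

lemma IsVertexCover.induce_preconnected (hG : G.Preconnected) (hcov : IsVertexCover G T)
    (hmerge : ∀ w ∉ T, ∀ a b : T, G.Adj w a → G.Adj w b → (G.induce T).Reachable a b) :
    (G.induce T).Preconnected := by
  rintro u ⟨v, hv⟩
  -- The second conjunct carries the induction across a walk vertex outside `T`.
  suffices ∀ x v (p : G.Walk x v) (hv : v ∈ T),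
      (∀ hx : x ∈ T, (G.induce T).Reachable ⟨x, hx⟩ ⟨v, hv⟩) ∧
      (x ∉ T → ∀ a : T, G.Adj x a → (G.induce T).Reachable a ⟨v, hv⟩) from
    (this u v (hG u v).some hv).1 u.2
  intro x v p hv
  induction p with
  | nil => exact ⟨fun _ => .rfl, fun hx => absurd hv hx⟩
  | @cons x y _ hxy _ ih =>
    constructor
    · intro hx
      by_cases hy : y ∈ T
      · have hxy' : (G.induce T).Adj ⟨x, hx⟩ ⟨y, hy⟩ := by simpa using hxy
        exact hxy'.reachable.trans ((ih hv).1 hy)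
      · exact (ih hv).2 hy ⟨x, hx⟩ hxy.symm
    · intro hx a hxa
      have hy : y ∈ T := (hcov hxy).resolve_left hx
      exact (hmerge x hx a ⟨y, hy⟩ hxa hxy).trans ((ih hv).1 hy)

lemma card_connectedComponent_induce_insert_lt [Finite V] {w : V} {a b : T}
    (hwa : G.Adj w a) (hwb : G.Adj w b) (hab : ¬(G.induce T).Reachable a b) :
    Nat.card (G.induce (insert w T)).ConnectedComponent <
      Nat.card (G.induce T).ConnectedComponent := by
  let φ := ConnectedComponent.map (G.induceHomOfLE (Set.subset_insert w T)).toHom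
  have hφ : ∀ c : T, G.Adj w c →
      φ ((G.induce T).connectedComponentMk c) =
        (G.induce (insert w T)).connectedComponentMk ⟨w, Set.mem_insert w T⟩ :=
    fun c hc => ConnectedComponent.sound <| Adj.reachable <| by simp [induceHom, hc.symm]
  have hsurj : Function.Surjective φ := by
    refine ConnectedComponent.ind ?_
    rintro ⟨x, rfl | hx⟩
    · exact ⟨_, hφ a hwa⟩
    · exact ⟨(G.induce T).connectedComponentMk ⟨x, hx⟩, rfl⟩
  have hninj : ¬Function.Injective φ := fun hinj =>
    hab (ConnectedComponent.exact (hinj ((hφ a hwa).trans (hφ b hwb).symm)))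
  have := Fintype.ofFinite (G.induce T).ConnectedComponent
  have := Fintype.ofFinite (G.induce (insert w T)).ConnectedComponent
  simpa only [Nat.card_eq_fintype_card] using
    Fintype.card_lt_of_surjective_not_injective φ hsurj hninj

theorem IsVertexCover.exists_connected_superset [Finite V] (hG : G.Connected)
    (hT : T.Nonempty) (hcov : IsVertexCover G T) :
    ∃ T' : Set V, T ⊆ T' ∧ IsVertexCover G T' ∧ (G.induce T').Connected ∧
      T'.ncard + 1 ≤ T.ncard + Nat.card (G.induce T).ConnectedComponent := by
  induction hk : Nat.card (G.induce T).ConnectedComponent using Nat.strong_induction_on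
    generalizing T with
  | _ k ih =>
  have : Nonempty T := hT.to_subtype
  by_cases hpre : (G.induce T).Preconnected
  · have hpos := Nat.card_pos (α := (G.induce T).ConnectedComponent)
    exact ⟨T, subset_rfl, hcov, ⟨hpre⟩, by omega⟩
  obtain ⟨w, hw, a, b, hwa, hwb, hab⟩ : ∃ w ∉ T, ∃ a b : T,
      G.Adj w a ∧ G.Adj w b ∧ ¬(G.induce T).Reachable a b := by
    by_contra! h
    exact hpre (hcov.induce_preconnected hG.preconnected h)
  have hsub := Set.subset_insert w T
  have hlt := hk ▸ card_connectedComponent_induce_insert_lt hwa hwb hab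
  obtain ⟨T', hTT', hcov', hconn', hcard'⟩ :=
    ih _ hlt (hT.mono hsub) (hcov.mono hsub) rfl
  rw [Set.ncard_insert_of_notMem hw] at hcard'
  exact ⟨T', hsub.trans hTT', hcov', hconn', by omega⟩

end

theorem stmt_2_general {V : Type*} [Fintype V]
    (G : SimpleGraph V) (hconn : G.Connected)
    (T : Set V) (hTne : T.Nonempty) (hcov : IsVertexCover G T)
    (t : ℕ) (ht : Nat.card (G.induce T).ConnectedComponent = t) :
    ∃ T' : Set V, T ⊆ T' ∧ IsVertexCover G T' ∧ (G.induce T').Connected ∧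
      T'.ncard ≤ T.ncard + t - 1 := by
  obtain ⟨T', hTT', hcov', hconn', hcard⟩ := hcov.exists_connected_superset hconn hTne
  exact ⟨T', hTT', hcov', hconn', by omega⟩

/-- Let G be a finite simple connected graph and let T be a nonempty vertex
cover of G such that the induced subgraph G[T] has exactly t connected components. Then
G has a connected vertex cover T' with T ⊆ T' and |T'| ≤ |T| + t − 1. -/
theorem stmt_2 {V : Type*} [Fintype V] [DecidableEq V]
    (G : SimpleGraph V) (hconn : G.Connected)
    (T : Set V) (hTne : T.Nonempty) (hcov : IsVertexCover G T)
    (t : ℕ) (ht : Nat.card (G.induce T).ConnectedComponent = t) :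
    ∃ T' : Set V, T ⊆ T' ∧ IsVertexCover G T' ∧ (G.induce T').Connected ∧
      T'.ncard ≤ T.ncard + t - 1 :=
  stmt_2_general G hconn T hTne hcov t ht
end

section
/- Let G be a finite simple connected graph with at least one edge, let k and d be positive integers, and let S ⊆ V(G) with |S| ≤ k be such that V(G) ∖ S can be partitioned into a clique C with |C| ≤ d − 1 and an independent set I. Then G has a connected vertex cover of size at most 2k + d − 1. -/
/-- A connected vertex cover is a vertex cover inducing a connected subgraph. -/
def IsConnectedVertexCover {V : Type*} (G : SimpleGraph V) (X : Set V) : Prop :=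
  IsVertexCover G X ∧ (G.induce X).Connected

section

open Finset
open SimpleGraph (induce_adj)

variable {V : Type*} {G : SimpleGraph V} {X : Set V}

theorem isVertexCover_of_compl_subset {I : Set V} (hI : ∀ u ∈ I, ∀ v ∈ I, ¬ G.Adj u v)
    (hXI : Xᶜ ⊆ I) : IsVertexCover G X := fun u v huv => by
  by_contra! h
  exact hI u (hXI h.1) v (hXI h.2) huv

namespace IsVertexCover

theorem mono_s3 {Y : Set V} (hX : IsVertexCover G X) (hXY : X ⊆ Y) : IsVertexCover G Y :=
  fun _ _ huv => (hX huv).imp (@hXY _) (@hXY _)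

theorem nonempty (hX : IsVertexCover G X) (hG : G.edgeSet.Nonempty) : X.Nonempty := by
  obtain ⟨e, he⟩ := hG
  induction e using Sym2.ind with
  | _ u v => exact (hX he).elim (⟨u, ·⟩) (⟨v, ·⟩)

theorem exists_adj_adj_not_reachable (hX : IsVertexCover G X) (hG : G.Connected)
    {a b : X} (hab : ¬ (G.induce X).Reachable a b) :
    ∃ w ∉ X, ∃ x y : X, ¬ (G.induce X).Reachable x y ∧ G.Adj x w ∧ G.Adj w y := by
  -- `B` is the component of `a` in `G[X]` together with its neighbours outside `X`;
  -- a walk from `a` to `b` in `G` has to leave `B`.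
  let A : Set V := {v | ∃ h : v ∈ X, (G.induce X).Reachable a ⟨v, h⟩}
  let B : Set V := A ∪ {w | w ∉ X ∧ ∃ x : X, (G.induce X).Reachable a x ∧ G.Adj x w}
  have haB : (a : V) ∈ B := Or.inl ⟨a.2, .rfl⟩
  have hbB : (b : V) ∉ B := by
    rintro (⟨_, hab'⟩ | ⟨hb, -⟩)
    exacts [hab hab', hb b.2]
  obtain ⟨p⟩ := hG.preconnected a b
  obtain ⟨⟨⟨u, v⟩, huv⟩, -, huB, hvB⟩ := p.exists_boundary_dart B haB hbB
  rcases huB with ⟨hu, hau⟩ | ⟨hu, x, hax, hxu⟩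
  · exfalso
    apply hvB
    by_cases hv : v ∈ X
    · exact Or.inl ⟨hv, hau.trans (induce_adj.2 huv : (G.induce X).Adj ⟨u, hu⟩ ⟨v, hv⟩).reachable⟩
    · exact Or.inr ⟨hv, ⟨u, hu⟩, hau, huv⟩
  · have hv : v ∈ X := (hX huv).resolve_left hu
    exact ⟨u, hu, x, ⟨v, hv⟩, fun hxv => hvB (Or.inl ⟨hv, hax.trans hxv⟩), hxu, huv⟩

/-- `R` meets every component of `G[X]`; each missing connection costs one extra vertex. -/
theorem exists_connected_superset_s3 (hX : IsVertexCover G X) (hG : G.Connected) (hXne : X.Nonempty)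
    (R : Finset V) (hR : ∀ x : X, ∃ r : X, ↑r ∈ R ∧ (G.induce X).Reachable r x) :
    ∃ T, X ⊆ T ∧ (G.induce T).Connected ∧ T.ncard ≤ X.ncard + #R - 1 := by
  classical
  induction R using Finset.strongInduction generalizing X with
  | H R ih =>
  have : Nonempty X := hXne.to_subtype
  have hRpos : 0 < #R := by
    obtain ⟨r, hr, -⟩ := hR (Classical.arbitrary X)
    exact Finset.card_pos.2 ⟨r, hr⟩
  by_cases hconn : (G.induce X).Connected
  · exact ⟨X, subset_rfl, hconn, by omega⟩
  obtain ⟨a, b, hab⟩ : ∃ a b : X, ¬ (G.induce X).Reachable a b := by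
    contrapose! hconn
    exact ⟨hconn⟩
  obtain ⟨w, hw, x, y, hxy, hxw, hwy⟩ := hX.exists_adj_adj_not_reachable hG hab
  obtain ⟨r, hr, hrx⟩ := hR x
  obtain ⟨s, hs, hsy⟩ := hR y
  have hrs : (r : V) ≠ s := fun h => hxy (hrx.symm.trans ((Subtype.ext h : r = s) ▸ hsy))
  have hXY : X ⊆ insert w X := Set.subset_insert w X
  let ι : G.induce X →g G.induce (insert w X) := (G.induceHomOfLE hXY).toHom
  let w' : ↥(insert w X) := ⟨w, Set.mem_insert w X⟩
  have hsw : (G.induce (insert w X)).Reachable (ι s) w' :=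
    (hsy.map ι).trans (induce_adj.2 hwy.symm : (G.induce _).Adj (ι y) w').reachable
  have hsr : (G.induce (insert w X)).Reachable (ι s) (ι r) :=
    hsw.trans ((induce_adj.2 hxw.symm : (G.induce _).Adj w' (ι x)).reachable.trans
      (hrx.map ι).symm)
  have hR' : ∀ z : ↥(insert w X), ∃ t : ↥(insert w X), ↑t ∈ R.erase r ∧
      (G.induce (insert w X)).Reachable t z := by
    rintro ⟨z, rfl | hz⟩
    · exact ⟨ι s, Finset.mem_erase.2 ⟨hrs.symm, hs⟩, hsw⟩
    obtain ⟨t, ht, htz⟩ := hR ⟨z, hz⟩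
    by_cases htr : (t : V) = r
    · obtain rfl : t = r := Subtype.ext htr
      exact ⟨ι s, Finset.mem_erase.2 ⟨hrs.symm, hs⟩, hsr.trans (htz.map ι)⟩
    · exact ⟨ι t, Finset.mem_erase.2 ⟨htr, ht⟩, htz.map ι⟩
  obtain ⟨T, hYT, hT, hTcard⟩ := ih (R.erase r) (Finset.erase_ssubset hr) (hX.mono_s3 hXY)
    (Set.insert_nonempty w X) hR'
  refine ⟨T, hXY.trans hYT, hT, ?_⟩
  have := Set.ncard_insert_le w X
  have := Finset.card_erase_of_mem hr
  omega

end IsVertexCover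

theorem exists_finset_reachable_of_isClique {S C : Set V} (hS : S.Finite) (hC : G.IsClique C)
    (hne : (S ∪ C).Nonempty) :
    ∃ R : Finset V, #R ≤ S.ncard + 1 ∧
      ∀ x : ↥(S ∪ C), ∃ r : ↥(S ∪ C), ↑r ∈ R ∧ (G.induce (S ∪ C)).Reachable r x := by
  classical
  obtain ⟨c, hc⟩ : ∃ c : ↥(S ∪ C), C.Nonempty → ↑c ∈ C := by
    by_cases hCne : C.Nonempty
    · exact ⟨⟨hCne.some, Or.inr hCne.some_mem⟩, fun _ => hCne.some_mem⟩
    · exact ⟨⟨hne.some, hne.some_mem⟩, fun h => absurd h hCne⟩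
  refine ⟨insert (c : V) hS.toFinset, ?_, ?_⟩
  · rw [Set.ncard_eq_toFinset_card S hS]
    exact Finset.card_insert_le _ _
  rintro ⟨x, hx | hx⟩
  · exact ⟨⟨x, Or.inl hx⟩, Finset.mem_insert_of_mem (hS.mem_toFinset.2 hx), .rfl⟩
  refine ⟨c, Finset.mem_insert_self _ _, ?_⟩
  by_cases hcx : (c : V) = x
  · exact (Subtype.ext hcx : c = ⟨x, Or.inr hx⟩) ▸ .rfl
  · exact (induce_adj.2 (hC (hc ⟨x, hx⟩) hx hcx) : (G.induce _).Adj c ⟨x, Or.inr hx⟩).reachable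

end

theorem stmt_3_general {V : Type*} [Fintype V]
    (G : SimpleGraph V) (hconn : G.Connected) (hedge : G.edgeSet.Nonempty)
    (k d : ℕ) (hd : 0 < d)
    (S C I : Set V) (hS : S.ncard ≤ k)
    (hpart : C ∪ I = Sᶜ)
    (hC : G.IsClique C) (hCcard : C.ncard ≤ d - 1)
    (hI : ∀ u ∈ I, ∀ v ∈ I, ¬ G.Adj u v) :
    ∃ T : Set V, IsConnectedVertexCover G T ∧ T.ncard ≤ 2 * k + d - 1 := by
  have hXI : (S ∪ C)ᶜ ⊆ I := fun z hz => by
    rw [Set.compl_union] at hz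
    exact ((hpart ▸ hz.1 : z ∈ C ∪ I)).resolve_left hz.2
  have hX : IsVertexCover G (S ∪ C) := isVertexCover_of_compl_subset hI hXI
  have hXne := hX.nonempty hedge
  obtain ⟨R, hRcard, hR⟩ := exists_finset_reachable_of_isClique S.toFinite hC hXne
  obtain ⟨T, hXT, hT, hTcard⟩ := hX.exists_connected_superset_s3 hconn hXne R hR
  refine ⟨T, ⟨hX.mono_s3 hXT, hT⟩, ?_⟩
  have := Set.ncard_union_le S C
  omega

/-- Let G be a finite simple connected graph with at least one edge, let k
and d be positive integers, and let S ⊆ V(G) with |S| ≤ k be such that V(G) ∖ S can be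
partitioned into a clique C with |C| ≤ d − 1 and an independent set I. Then G has a
connected vertex cover of size at most 2k + d − 1. -/
theorem stmt_3 {V : Type*} [Fintype V] [DecidableEq V]
    (G : SimpleGraph V) (hconn : G.Connected) (hedge : G.edgeSet.Nonempty)
    (k d : ℕ) (hk : 0 < k) (hd : 0 < d)
    (S C I : Set V) (hS : S.ncard ≤ k)
    (hpart : C ∪ I = Sᶜ) (hdisj : Disjoint C I)
    (hC : G.IsClique C) (hCcard : C.ncard ≤ d - 1)
    (hI : ∀ u ∈ I, ∀ v ∈ I, ¬ G.Adj u v) :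
    ∃ T : Set V, IsConnectedVertexCover G T ∧ T.ncard ≤ 2 * k + d - 1 :=
  stmt_3_general G hconn hedge k d hd S C I hS hpart hC hCcard hI
end

section
/- Let G be a finite simple connected graph and let C ⊆ V(G) be a clique with 2 ≤ |C| < |V(G)|. Let G' be the graph obtained from G by deleting all vertices of C and adding a new vertex u_C adjacent exactly to the vertices of N_G(C) ∖ C (the vertices outside C having a neighbour in C). If D' is a connected vertex cover of G', then G has a connected vertex cover D with |D| ≤ |D'| + |C| − 1. -/
/-!
Let `S` be the set of vertices of `D'` other than `u_C` (encoded as `none`), read in `G`.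

If `u_C ∈ D'`, take `D = C ∪ S`. An edge of `G'` at `u_C` comes from an edge of `G` into the
clique `C`, so a walk in `G'[D']` lifts to a walk in `G[D]`, and `|D| ≤ |C| + |D'| - 1`.

If `u_C ∉ D'`, then `D'` covers the edges at `u_C` from the other side, so `S` contains
`N_G(C) ∖ C`. As `D'` is nonempty, some vertex lies outside `C`, so the connected graph `G`
has an edge `c v` leaving `C`; pick a vertex `x ≠ c` of `C`, and take
`D = (C ∖ {x}) ∪ S`: the edges inside `C` are still covered because only `x` is missing, and the
edge `c v` joins the clique `C ∖ {x}` to `S`, which is connected because `G'[D'] ≅ G[S]`.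
-/

open Set

namespace SimpleGraph

variable {V W : Type*} {G : SimpleGraph V}

theorem Connected.of_reachable_map {H : SimpleGraph W} (hH : H.Connected) (f : W → V)
    (hf : ∀ a b, H.Adj a b → G.Reachable (f a) (f b)) (hcov : ∀ v, ∃ a, G.Reachable (f a) v) :
    G.Connected := by
  have hreach (a b : W) : G.Reachable (f a) (f b) := by
    simp only [reachable_iff_reflTransGen] at hf ⊢
    exact ((reachable_iff_reflTransGen a b).1 (hH.preconnected a b)).lift' f hf
  refine (connected_iff G).2 ⟨fun v w => ?_, ⟨f hH.nonempty.some⟩⟩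
  obtain ⟨a, ha⟩ := hcov v
  obtain ⟨b, hb⟩ := hcov w
  exact ha.symm.trans ((hreach a b).trans hb)

theorem IsClique.reachable_induce {s t : Set V} (hs : G.IsClique s) {a b : t} (ha : a.1 ∈ s)
    (hb : b.1 ∈ s) : (G.induce t).Reachable a b := by
  rcases eq_or_ne a b with rfl | hab
  · rfl
  · exact Adj.reachable (hs ha hb (Subtype.coe_ne_coe.2 hab))

theorem Connected.exists_adj_of_mem_of_notMem (hG : G.Connected) {s : Set V} {u v : V}
    (hu : u ∈ s) (hv : v ∉ s) : ∃ x ∈ s, ∃ y ∉ s, G.Adj x y := by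
  obtain ⟨p⟩ := hG.preconnected u v
  obtain ⟨d, -, hd₁, hd₂⟩ := p.exists_boundary_dart s hu hv
  exact ⟨d.fst, hd₁, d.snd, hd₂, d.adj⟩

end SimpleGraph

theorem Set.ncard_preimage_some_le {α : Type*} {s : Set (Option α)} (hs : s.Finite) :
    (some ⁻¹' s).ncard ≤ s.ncard := by
  rw [← ncard_image_of_injective _ (Option.some_injective α)]
  exact ncard_le_ncard (image_preimage_subset _ _) hs

theorem Set.ncard_preimage_some_add_one {α : Type*} {s : Set (Option α)} (hs : s.Finite)
    (h : none ∈ s) : (some ⁻¹' s).ncard + 1 = s.ncard := by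
  have hrange : s ∩ range some = s \ {none} := by ext (_ | _) <;> simp
  rw [← ncard_image_of_injective _ (Option.some_injective α), image_preimage_eq_inter_range,
    hrange, ncard_sdiff_singleton_add_one h hs]

section Contraction

variable {V : Type*} {G : SimpleGraph V} {C : Set V} {G' : SimpleGraph (Option {v : V // v ∉ C})}
  {D' : Set (Option {v : V // v ∉ C})}

def oldVertices (C : Set V) (D' : Set (Option {v : V // v ∉ C})) : Set V :=
  Subtype.val '' (some ⁻¹' D')

theorem val_mem_oldVertices {a : {v : V // v ∉ C}} (ha : some a ∈ D') :
    a.1 ∈ oldVertices C D' :=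
  mem_image_of_mem _ ha

theorem mem_oldVertices_of_adj
    (hnew : ∀ a : {v : V // v ∉ C}, G'.Adj (some a) none ↔ ∃ c ∈ C, G.Adj ↑a c)
    (hD' : IsVertexCover G' D') (hn : none ∉ D') {v c : V} (hv : v ∉ C) (hc : c ∈ C)
    (hvc : G.Adj v c) : v ∈ oldVertices C D' :=
  (hD' ((hnew ⟨v, hv⟩).2 ⟨c, hc, hvc⟩)).elim val_mem_oldVertices (absurd · hn)

theorem isVertexCover_union_oldVertices
    (hadj : ∀ a b : {v : V // v ∉ C}, G'.Adj (some a) (some b) ↔ G.Adj ↑a ↑b)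
    (hnew : ∀ a : {v : V // v ∉ C}, G'.Adj (some a) none ↔ ∃ c ∈ C, G.Adj ↑a c)
    (hD' : IsVertexCover G' D') {T : Set V} (hT : ∀ u ∈ C, ∀ v ∈ C, u ≠ v → u ∈ T ∨ v ∈ T)
    (hnone : none ∈ D' → C ⊆ T) : IsVertexCover G (T ∪ oldVertices C D') := by
  intro u v huv
  by_cases hu : u ∈ C <;> by_cases hv : v ∈ C
  · exact (hT u hu v hv huv.ne).imp Or.inl Or.inl
  · by_cases hn : none ∈ D'
    · exact Or.inl (Or.inl (hnone hn hu))
    · exact Or.inr (Or.inr (mem_oldVertices_of_adj hnew hD' hn hv hu huv.symm))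
  · by_cases hn : none ∈ D'
    · exact Or.inr (Or.inl (hnone hn hv))
    · exact Or.inl (Or.inr (mem_oldVertices_of_adj hnew hD' hn hu hv huv))
  · exact (hD' ((hadj ⟨u, hu⟩ ⟨v, hv⟩).2 huv)).imp (Or.inr ∘ val_mem_oldVertices)
      (Or.inr ∘ val_mem_oldVertices)

theorem connected_induce_union_oldVertices (hC : G.IsClique C)
    (hadj : ∀ a b : {v : V // v ∉ C}, G'.Adj (some a) (some b) ↔ G.Adj ↑a ↑b)
    (hnew : ∀ a : {v : V // v ∉ C}, G'.Adj (some a) none ↔ ∃ c ∈ C, G.Adj ↑a c)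
    (hD' : (G'.induce D').Connected) {T : Set V} {c : V} (hTC : T ⊆ C) (hcT : c ∈ T)
    (hnone : none ∈ D' → C ⊆ T) (hlink : none ∈ D' ∨ ∃ v ∈ oldVertices C D', G.Adj v c) :
    (G.induce (T ∪ oldVertices C D')).Connected := by
  set D := T ∪ oldVertices C D'
  let f : Option {v : V // v ∉ C} → V := fun o => o.elim c Subtype.val
  have hf : MapsTo f D' D := by
    rintro (_ | a) ha
    exacts [Or.inl hcT, Or.inr (val_mem_oldVertices ha)]
  have hreach_none (a : {v : V // v ∉ C}) (ha : some a ∈ D') (hn : none ∈ D')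
      (h : G'.Adj (some a) none) :
      (G.induce D).Reachable (hf.restrict f _ _ ⟨some a, ha⟩) (hf.restrict f _ _ ⟨none, hn⟩) := by
    obtain ⟨c', hc', hac'⟩ := (hnew a).1 h
    exact (SimpleGraph.Adj.reachable (v := ⟨c', Or.inl (hnone hn hc')⟩) hac').trans
      (hC.reachable_induce hc' (hTC hcT))
  refine hD'.of_reachable_map (hf.restrict f _ _) ?_ ?_
  · rintro ⟨_ | a, ha⟩ ⟨_ | b, hb⟩ hab
    · exact (hab.ne rfl).elim
    · exact (hreach_none b hb ha hab.symm).symm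
    · exact hreach_none a ha hb hab
    · exact SimpleGraph.Adj.reachable ((hadj a b).1 hab)
  · rintro ⟨v, hvT | hvS⟩
    · rcases hlink with hn | ⟨w, ⟨a, ha, rfl⟩, hwc⟩
      · exact ⟨⟨none, hn⟩, hC.reachable_induce (hTC hcT) (hTC hvT)⟩
      · exact ⟨⟨some a, ha⟩, (SimpleGraph.Adj.reachable (v := ⟨c, Or.inl hcT⟩) hwc).trans
          (hC.reachable_induce (hTC hcT) (hTC hvT))⟩
    · obtain ⟨a, ha, rfl⟩ := hvS
      exact ⟨⟨some a, ha⟩, .rfl⟩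

end Contraction

theorem stmt_5_general {V : Type*} [Fintype V]
    (G : SimpleGraph V) (hconn : G.Connected)
    (C : Set V) (hC : G.IsClique C) (h2 : 2 ≤ C.ncard)
    (G' : SimpleGraph (Option {v : V // v ∉ C}))
    (hadj : ∀ a b : {v : V // v ∉ C}, G'.Adj (some a) (some b) ↔ G.Adj ↑a ↑b)
    (hnew : ∀ a : {v : V // v ∉ C}, G'.Adj (some a) none ↔ ∃ c ∈ C, G.Adj ↑a c)
    (D' : Set (Option {v : V // v ∉ C}))
    (hD' : IsConnectedVertexCover G' D') :
    ∃ D : Set V, IsConnectedVertexCover G D ∧ D.ncard ≤ D'.ncard + C.ncard - 1 := by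
  obtain ⟨hcover, hconn'⟩ := hD'
  have hS : (oldVertices C D').ncard ≤ (some ⁻¹' D').ncard := ncard_image_le (toFinite _)
  obtain ⟨c₀, hc₀⟩ := nonempty_of_ncard_ne_zero (by omega : C.ncard ≠ 0)
  by_cases hn : none ∈ D'
  · refine ⟨C ∪ oldVertices C D', ⟨isVertexCover_union_oldVertices hadj hnew hcover
      (fun u hu _ _ _ => Or.inl hu) fun _ => subset_rfl, connected_induce_union_oldVertices hC
      hadj hnew hconn' subset_rfl hc₀ (fun _ => subset_rfl) (Or.inl hn)⟩, ?_⟩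
    have := ncard_union_le C (oldVertices C D')
    have := ncard_preimage_some_add_one (toFinite D') hn
    omega
  · obtain ⟨⟨_ | a, ha⟩⟩ := hconn'.nonempty
    · exact absurd ha hn
    obtain ⟨c, hc, v, hv, hcv⟩ := hconn.exists_adj_of_mem_of_notMem hc₀ a.2
    obtain ⟨x, hx, hxc⟩ := exists_ne_of_one_lt_ncard (by omega : 1 < C.ncard) c
    have hcover_clique : ∀ u ∈ C, ∀ w ∈ C, u ≠ w → u ∈ C \ {x} ∨ w ∈ C \ {x} := by
      intro u hu w hw huw
      rcases eq_or_ne u x with rfl | hux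
      exacts [Or.inr ⟨hw, huw.symm⟩, Or.inl ⟨hu, hux⟩]
    refine ⟨(C \ {x}) ∪ oldVertices C D', ⟨isVertexCover_union_oldVertices hadj hnew hcover
      hcover_clique (absurd · hn), connected_induce_union_oldVertices hC hadj hnew hconn'
      sdiff_subset ⟨hc, hxc.symm⟩ (absurd · hn)
      (Or.inr ⟨v, mem_oldVertices_of_adj hnew hcover hn hv hc hcv.symm, hcv.symm⟩)⟩, ?_⟩
    have := ncard_union_le (C \ {x}) (oldVertices C D')
    have := ncard_sdiff_singleton_of_mem hx
    have := ncard_preimage_some_le (toFinite D')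
    omega

/-- Let G be a finite simple connected graph and C ⊆ V(G) a clique with
2 ≤ |C| < |V(G)|. Let G' be the graph obtained from G by deleting all vertices of C
and adding a new vertex u_C (modelled as `none`) adjacent exactly to the vertices of
N_G(C) ∖ C. If D' is a connected vertex cover of G', then G has a connected vertex
cover D with |D| ≤ |D'| + |C| − 1. -/
theorem stmt_5 {V : Type*} [Fintype V] [DecidableEq V]
    (G : SimpleGraph V) (hconn : G.Connected)
    (C : Set V) (hC : G.IsClique C) (h2 : 2 ≤ C.ncard) (hlt : C.ncard < Fintype.card V)
    (G' : SimpleGraph (Option {v : V // v ∉ C}))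
    (hadj : ∀ a b : {v : V // v ∉ C}, G'.Adj (some a) (some b) ↔ G.Adj ↑a ↑b)
    (hnew : ∀ a : {v : V // v ∉ C}, G'.Adj (some a) none ↔ ∃ c ∈ C, G.Adj ↑a c)
    (D' : Set (Option {v : V // v ∉ C}))
    (hD' : IsConnectedVertexCover G' D') :
    ∃ D : Set V, IsConnectedVertexCover G D ∧ D.ncard ≤ D'.ncard + C.ncard - 1 :=
  stmt_5_general G hconn C hC h2 G' hadj hnew D' hD'
end

section
/- Let G be a finite simple graph and let C ⊆ V(G) be a clique with |C| ≥ 2. Let G' be the graph obtained from G by deleting all vertices of C and adding a new vertex u_C adjacent exactly to the vertices of N_G(C) ∖ C (the vertices outside C having a neighbour in C). If D is a connected vertex cover of G, then (D ∖ C) ∪ {u_C} is a connected vertex cover of G' of size at most |D| − |C| + 2. -/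
namespace SimpleGraph

variable {V W : Type*} {G : SimpleGraph V} {H : SimpleGraph W}

theorem Reachable.map_of_adj_imp_eq_or_adj (f : V → W)
    (hf : ∀ x y, G.Adj x y → f x = f y ∨ H.Adj (f x) (f y)) {x y : V} (h : G.Reachable x y) :
    H.Reachable (f x) (f y) := by
  rw [reachable_iff_reflTransGen] at h ⊢
  refine h.lift' f fun a b hab => ?_
  rcases hf a b hab with hab | hab
  · change Relation.ReflTransGen H.Adj (f a) (f b)
    rw [hab]
  · exact .single hab

theorem Connected.induce_image {D : Set V} (hD : (G.induce D).Connected) (f : V → W)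
    (hf : ∀ x ∈ D, ∀ y ∈ D, G.Adj x y → f x = f y ∨ H.Adj (f x) (f y)) :
    (H.induce (f '' D)).Connected := by
  let g : D → f '' D := fun x => ⟨f x, Set.mem_image_of_mem f x.2⟩
  have hg : Function.Surjective g := by
    rintro ⟨_, x, hx, rfl⟩
    exact ⟨⟨x, hx⟩, rfl⟩
  have hreach (x y : D) : (H.induce (f '' D)).Reachable (g x) (g y) := by
    exact (hD.preconnected x y).map_of_adj_imp_eq_or_adj g fun a b hab =>
      (hf a a.2 b b.2 hab).imp Subtype.ext id
  have := hD.nonempty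
  refine Connected.mk fun u v => ?_
  obtain ⟨x, rfl⟩ := hg u
  obtain ⟨y, rfl⟩ := hg v
  exact hreach x y

end SimpleGraph

theorem SimpleGraph.IsClique.subsingleton_diff_of_isVertexCover {V : Type*} {G : SimpleGraph V}
    {C D : Set V} (hC : G.IsClique C) (hD : IsVertexCover G D) : (C \ D).Subsingleton := by
  intro a ha b hb
  by_contra hab
  rcases hD (hC ha.1 hb.1 hab) with h | h
  exacts [ha.2 h, hb.2 h]

open Classical in
noncomputable def contractSet {V : Type*} (C : Set V) (v : V) : Option {v : V // v ∉ C} :=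
  if h : v ∈ C then none else some ⟨v, h⟩

section contractSet

variable {V : Type*} {C D : Set V} {v : V}

theorem contractSet_of_mem (h : v ∈ C) : contractSet C v = none := dif_pos h

theorem contractSet_of_notMem (h : v ∉ C) : contractSet C v = some ⟨v, h⟩ := dif_neg h

theorem image_contractSet (hDC : (D ∩ C).Nonempty) :
    contractSet C '' D = insert none (some '' {a : {v : V // v ∉ C} | ↑a ∈ D}) := by
  ext (_ | a)
  · obtain ⟨c, hcD, hcC⟩ := hDC
    simpa using ⟨c, hcD, contractSet_of_mem hcC⟩
  · simp only [Set.mem_image, Set.mem_insert_iff, reduceCtorEq, Set.mem_ofPred_eq,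
      Option.some_inj, exists_eq_right, false_or]
    constructor
    · rintro ⟨v, hv, hva⟩
      by_cases hvC : v ∈ C
      · simp [contractSet_of_mem hvC] at hva
      · rw [contractSet_of_notMem hvC, Option.some_inj] at hva
        exact hva ▸ hv
    · exact fun ha => ⟨a, ha, contractSet_of_notMem a.2⟩

theorem ncard_insert_none_image_some_le :
    (insert none (some '' {a : {v : V // v ∉ C} | ↑a ∈ D})).ncard ≤ (D \ C).ncard + 1 := by
  refine (Set.ncard_insert_le _ _).trans (Nat.add_le_add_right (le_of_eq ?_) 1)
  rw [Set.ncard_image_of_injective _ (Option.some_injective _),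
    ← Set.ncard_image_of_injective _ Subtype.val_injective]
  congr 1
  ext v
  simp

variable {G : SimpleGraph V} {G' : SimpleGraph (Option {v : V // v ∉ C})}

theorem contractSet_eq_or_adj
    (hadj : ∀ a b : {v : V // v ∉ C}, G'.Adj (some a) (some b) ↔ G.Adj ↑a ↑b)
    (hnew : ∀ a : {v : V // v ∉ C}, G'.Adj (some a) none ↔ ∃ c ∈ C, G.Adj ↑a c)
    {x y : V} (hxy : G.Adj x y) :
    contractSet C x = contractSet C y ∨ G'.Adj (contractSet C x) (contractSet C y) := by
  by_cases hx : x ∈ C <;> by_cases hy : y ∈ C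
  · simp only [contractSet_of_mem hx, contractSet_of_mem hy, true_or]
  · rw [contractSet_of_mem hx, contractSet_of_notMem hy]
    exact .inr ((hnew _).2 ⟨x, hx, hxy.symm⟩).symm
  · rw [contractSet_of_notMem hx, contractSet_of_mem hy]
    exact .inr ((hnew _).2 ⟨y, hy, hxy⟩)
  · rw [contractSet_of_notMem hx, contractSet_of_notMem hy]
    exact .inr ((hadj _ _).2 hxy)

theorem isVertexCover_insert_none_image_some
    (hadj : ∀ a b : {v : V // v ∉ C}, G'.Adj (some a) (some b) ↔ G.Adj ↑a ↑b)
    (hD : IsVertexCover G D) :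
    IsVertexCover G' (insert none (some '' {a : {v : V // v ∉ C} | ↑a ∈ D})) := by
  rintro (_ | a) (_ | b) hab
  · exact .inl (Set.mem_insert _ _)
  · exact .inl (Set.mem_insert _ _)
  · exact .inr (Set.mem_insert _ _)
  · rcases hD ((hadj a b).1 hab) with h | h
    · exact .inl (Set.mem_insert_of_mem _ ⟨a, h, rfl⟩)
    · exact .inr (Set.mem_insert_of_mem _ ⟨b, h, rfl⟩)

end contractSet

theorem stmt_6_general {V : Type*} [Fintype V]
    (G : SimpleGraph V)
    (C : Set V) (hC : G.IsClique C) (h2 : 2 ≤ C.ncard)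
    (G' : SimpleGraph (Option {v : V // v ∉ C}))
    (hadj : ∀ a b : {v : V // v ∉ C}, G'.Adj (some a) (some b) ↔ G.Adj ↑a ↑b)
    (hnew : ∀ a : {v : V // v ∉ C}, G'.Adj (some a) none ↔ ∃ c ∈ C, G.Adj ↑a c)
    (D : Set V) (hD : IsConnectedVertexCover G D) :
    IsConnectedVertexCover G'
        (insert none (some '' {a : {v : V // v ∉ C} | ↑a ∈ D})) ∧
      (insert none (some '' {a : {v : V // v ∉ C} | ↑a ∈ D})).ncard
        ≤ D.ncard - C.ncard + 2 := by
  obtain ⟨hcover, hconn⟩ := hD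
  have hmissed : (C \ D).ncard ≤ 1 :=
    Set.ncard_le_one_iff_subsingleton.2 (hC.subsingleton_diff_of_isVertexCover hcover)
  have hsplitC := Set.ncard_inter_add_ncard_sdiff_eq_ncard C D
  have hsplitD := Set.ncard_inter_add_ncard_sdiff_eq_ncard D C
  rw [Set.inter_comm] at hsplitC
  have hmeet : (D ∩ C).Nonempty := Set.nonempty_of_ncard_ne_zero (by omega)
  refine ⟨⟨isVertexCover_insert_none_image_some hadj hcover, ?_⟩,
    ncard_insert_none_image_some_le.trans (by omega)⟩
  rw [← image_contractSet hmeet]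
  exact hconn.induce_image _ fun _ _ _ _ => contractSet_eq_or_adj hadj hnew

/-- Let G be a finite simple graph and C ⊆ V(G) a clique with |C| ≥ 2.
Let G' be the graph obtained from G by deleting all vertices of C and adding a new
vertex u_C (modelled as `none`) adjacent exactly to the vertices of N_G(C) ∖ C. If D is
a connected vertex cover of G, then (D ∖ C) ∪ {u_C} is a connected vertex cover of G'
of size at most |D| − |C| + 2. -/
theorem stmt_6 {V : Type*} [Fintype V] [DecidableEq V]
    (G : SimpleGraph V)
    (C : Set V) (hC : G.IsClique C) (h2 : 2 ≤ C.ncard)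
    (G' : SimpleGraph (Option {v : V // v ∉ C}))
    (hadj : ∀ a b : {v : V // v ∉ C}, G'.Adj (some a) (some b) ↔ G.Adj ↑a ↑b)
    (hnew : ∀ a : {v : V // v ∉ C}, G'.Adj (some a) none ↔ ∃ c ∈ C, G.Adj ↑a c)
    (D : Set V) (hD : IsConnectedVertexCover G D) :
    IsConnectedVertexCover G'
        (insert none (some '' {a : {v : V // v ∉ C} | ↑a ∈ D})) ∧
      (insert none (some '' {a : {v : V // v ∉ C} | ↑a ∈ D})).ncard
        ≤ D.ncard - C.ncard + 2 :=
  stmt_6_general G C hC h2 G' hadj hnew D hD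
end

section
/- Let G be a finite simple graph and let x and y be distinct non-adjacent vertices of G with N_G(x) = N_G(y) (false twins). If D is a connected vertex cover of the graph G − x with y ∉ D, then D is a connected vertex cover of G. -/
namespace SimpleGraph

variable {V : Type*} (G : SimpleGraph V)

noncomputable def induceInduceIso (s : Set V) (t : Set s) :
    (G.induce s).induce t ≃g G.induce (Subtype.val '' t) where
  toEquiv := Equiv.Set.image Subtype.val t Subtype.val_injective
  map_rel_iff' := Iff.rfl

theorem connected_induce_image_val_iff {s : Set V} {t : Set s} :
    (G.induce (Subtype.val '' t)).Connected ↔ ((G.induce s).induce t).Connected :=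
  (G.induceInduceIso s t).connected_iff.symm

end SimpleGraph

section VertexCover

variable {V : Type*} {G : SimpleGraph V}

theorem IsVertexCover.mem_image_val_of_adj {s : Set V} {D : Set s}
    (hD : IsVertexCover (G.induce s) D) {u v : V} (hu : u ∈ s) (hv : v ∈ s) (huv : G.Adj u v) :
    u ∈ Subtype.val '' D ∨ v ∈ Subtype.val '' D :=
  (hD (show (G.induce s).Adj ⟨u, hu⟩ ⟨v, hv⟩ from huv)).imp
    (fun h ↦ ⟨_, h, rfl⟩) (fun h ↦ ⟨_, h, rfl⟩)

/-- Every edge `x v` has a copy `y v` in `G - x`; as `y` is not in the cover, `v` is. -/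
theorem IsVertexCover.of_induce_compl_singleton {x y : V} (hxy : x ≠ y)
    (hN : G.neighborSet x ⊆ G.neighborSet y) {D : Set ({x}ᶜ : Set V)}
    (hD : IsVertexCover (G.induce {x}ᶜ) D) (hyD : y ∉ Subtype.val '' D) :
    IsVertexCover G (Subtype.val '' D) := by
  have hy : y ∈ ({x}ᶜ : Set V) := hxy.symm
  have mem_of_adj_x {v : V} (hxv : G.Adj x v) : v ∈ Subtype.val '' D :=
    (hD.mem_image_val_of_adj hy hxv.ne.symm (hN hxv)).resolve_left hyD
  intro u v huv
  by_cases hu : u = x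
  · exact .inr (mem_of_adj_x (hu ▸ huv))
  by_cases hv : v = x
  · exact .inl (mem_of_adj_x (hv ▸ huv.symm))
  exact hD.mem_image_val_of_adj hu hv huv

end VertexCover

theorem stmt_7_general {V : Type*}
    (G : SimpleGraph V) (x y : V) (hxy : x ≠ y)
    (htwin : G.neighborSet x = G.neighborSet y)
    (D : Set ↥({x}ᶜ : Set V))
    (hyD : (⟨y, Set.mem_compl_singleton_iff.mpr hxy.symm⟩ : ↥({x}ᶜ : Set V)) ∉ D)
    (hD : IsConnectedVertexCover (G.induce ({x}ᶜ : Set V)) D) :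
    IsConnectedVertexCover G (Subtype.val '' D) := by
  have hyD' : y ∉ Subtype.val '' D := fun h ↦ hyD (Subtype.val_injective.mem_set_image.mp h)
  exact ⟨hD.1.of_induce_compl_singleton hxy htwin.le hyD',
    G.connected_induce_image_val_iff.mpr hD.2⟩

/-- Let G be a finite simple graph and let x and y be distinct non-adjacent
vertices of G with N_G(x) = N_G(y) (false twins). If D is a connected vertex cover of the
graph G − x with y ∉ D, then D is a connected vertex cover of G. -/
theorem stmt_7 {V : Type*} [Fintype V] [DecidableEq V]
    (G : SimpleGraph V) (x y : V) (hxy : x ≠ y) (hnadj : ¬ G.Adj x y)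
    (htwin : G.neighborSet x = G.neighborSet y)
    (D : Set ↥({x}ᶜ : Set V))
    (hyD : (⟨y, Set.mem_compl_singleton_iff.mpr hxy.symm⟩ : ↥({x}ᶜ : Set V)) ∉ D)
    (hD : IsConnectedVertexCover (G.induce ({x}ᶜ : Set V)) D) :
    IsConnectedVertexCover G (Subtype.val '' D) :=
  stmt_7_general G x y hxy htwin D hyD hD
end

section
/- Let G be a finite simple graph and let x and y be distinct non-adjacent vertices of G with N_G(x) = N_G(y) (false twins). If D is a connected vertex cover of G with x ∈ D and y ∉ D, then (D ∖ {x}) ∪ {y} is a connected vertex cover of G of the same size. -/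
/-!
Since `x` and `y` have the same neighbourhood, the transposition of `x` and `y` is an
automorphism of `G`. Automorphisms map connected vertex covers to connected vertex covers of the
same size, and the transposition maps `D` onto `(D \ {x}) ∪ {y}`.
-/

section

variable {V W : Type*} {G : SimpleGraph V} {H : SimpleGraph W}

theorem IsVertexCover.image_iso (φ : G ≃g H) {D : Set V} (hD : IsVertexCover G D) :
    IsVertexCover H (φ '' D) := by
  intro u v huv
  rw [← φ.apply_symm_apply u, ← φ.apply_symm_apply v, φ.map_adj_iff] at huv
  exact (hD huv).imp (fun h ↦ ⟨_, h, φ.apply_symm_apply u⟩) (fun h ↦ ⟨_, h, φ.apply_symm_apply v⟩)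

theorem IsConnectedVertexCover.image_iso (φ : G ≃g H) {D : Set V}
    (hD : IsConnectedVertexCover G D) : IsConnectedVertexCover H (φ '' D) :=
  ⟨hD.1.image_iso φ, (φ.induce φ.injective.injOn.bijOn_image).connected_iff.mp hD.2⟩

end

namespace SimpleGraph

variable {V : Type*} [DecidableEq V] {G : SimpleGraph V} {x y : V}

theorem adj_swap_apply_left_iff (h : G.neighborSet x = G.neighborSet y) (u w : V) :
    G.Adj (Equiv.swap x y u) w ↔ G.Adj u w := by
  have hxy : G.Adj x w ↔ G.Adj y w := Set.ext_iff.mp h w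
  rw [Equiv.swap_apply_def]
  split_ifs with hx hy
  · rw [hx, hxy]
  · rw [hy, hxy]
  · rfl

theorem adj_swap_apply_iff (h : G.neighborSet x = G.neighborSet y) (u v : V) :
    G.Adj (Equiv.swap x y u) (Equiv.swap x y v) ↔ G.Adj u v := by
  rw [adj_swap_apply_left_iff h, adj_comm, adj_swap_apply_left_iff h, adj_comm]

def Iso.swapOfNeighborSetEq (h : G.neighborSet x = G.neighborSet y) : G ≃g G :=
  ⟨Equiv.swap x y, adj_swap_apply_iff h _ _⟩

end SimpleGraph

theorem stmt_8_general {V : Type*} [DecidableEq V]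
    (G : SimpleGraph V) (x y : V)
    (htwin : G.neighborSet x = G.neighborSet y)
    (D : Set V) (hD : IsConnectedVertexCover G D) (hxD : x ∈ D) (hyD : y ∉ D) :
    IsConnectedVertexCover G ((D \ {x}) ∪ {y}) ∧
      ((D \ {x}) ∪ {y}).ncard = D.ncard := by
  let φ := SimpleGraph.Iso.swapOfNeighborSetEq htwin
  have hyx : y ∉ ({x} : Set V) := (ne_of_mem_of_not_mem hxD hyD).symm
  have himage : (D \ {x}) ∪ {y} = φ '' D := by
    change _ = Equiv.swap x y '' D
    rw [Equiv.image_swap_of_mem_of_notMem hxD hyD, Set.insert_sdiff_of_notMem _ hyx,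
      Set.union_singleton]
  rw [himage]
  exact ⟨hD.image_iso φ, Set.ncard_image_of_injective D φ.injective⟩

/-- Let G be a finite simple graph and let x and y be distinct non-adjacent
vertices of G with N_G(x) = N_G(y) (false twins). If D is a connected vertex cover of G
with x ∈ D and y ∉ D, then (D ∖ {x}) ∪ {y} is a connected vertex cover of G of the same
size. -/
theorem stmt_8 {V : Type*} [Fintype V] [DecidableEq V]
    (G : SimpleGraph V) (x y : V) (hxy : x ≠ y) (hnadj : ¬ G.Adj x y)
    (htwin : G.neighborSet x = G.neighborSet y)
    (D : Set V) (hD : IsConnectedVertexCover G D) (hxD : x ∈ D) (hyD : y ∉ D) :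
    IsConnectedVertexCover G ((D \ {x}) ∪ {y}) ∧
      ((D \ {x}) ∪ {y}).ncard = D.ncard :=
  stmt_8_general G x y htwin D hD hxD hyD
end

section
/- Let G be a finite simple graph and let u be a vertex of G with N_G(u) ≠ ∅. Let G' be the graph obtained from G by deleting the closed neighbourhood N_G[u], adding a new vertex w adjacent exactly to those vertices of V(G) ∖ N_G[u] that have a neighbour (in G) in N_G(u), and adding a (possibly empty) set W of new vertices each adjacent only to w. If D' is a connected vertex cover of G' with w ∈ D', then D := (D' ∖ ({w} ∪ W)) ∪ N_G[u] is a connected vertex cover of G with |D| ≤ |D'| + |N_G(u)|. -/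
/-- With `S = N[u]` and `f` the copy map `V ∖ N[u] → V(G')`, this is the set
`(D' ∖ ({w} ∪ W)) ∪ N[u]`. -/
def liftCover {V V' : Type*} (S : Set V) (f : {v // v ∉ S} → V') (D' : Set V') : Set V :=
  {v | ∃ h : v ∉ S, f ⟨v, h⟩ ∈ D'} ∪ S

section LiftCover

variable {V V' : Type*} {G : SimpleGraph V} {G' : SimpleGraph V'} {S : Set V}
  {f : {v // v ∉ S} → V'} {D' : Set V'} {w : V'}

lemma liftCover_eq_image_preimage_union :
    liftCover S f D' = Subtype.val '' (f ⁻¹' D') ∪ S := by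
  rw [liftCover, Subtype.coe_image]
  rfl

lemma isVertexCover_liftCover (hf : ∀ a b : {v // v ∉ S}, G.Adj a b → G'.Adj (f a) (f b))
    (hD' : IsVertexCover G' D') : IsVertexCover G (liftCover S f D') := by
  intro a b hab
  by_cases ha : a ∈ S
  · exact Or.inl (Or.inr ha)
  by_cases hb : b ∈ S
  · exact Or.inr (Or.inr hb)
  rcases hD' (hf ⟨a, ha⟩ ⟨b, hb⟩ hab) with h | h
  · exact Or.inl (Or.inl ⟨ha, h⟩)
  · exact Or.inr (Or.inl ⟨hb, h⟩)

lemma ncard_liftCover_add_one_le (hf : f.Injective) (hf_ne : ∀ a, f a ≠ w) (hw : w ∈ D')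
    (hD' : D'.Finite) : (liftCover S f D').ncard + 1 ≤ D'.ncard + S.ncard := by
  have h_pre : (f ⁻¹' D').ncard ≤ (D' \ {w}).ncard :=
    Set.ncard_le_ncard_of_injOn f (fun a ha => ⟨ha, hf_ne a⟩) hf.injOn hD'.sdiff
  have h_diff : (D' \ {w}).ncard + 1 = D'.ncard := Set.ncard_sdiff_singleton_add_one hw hD'
  have h_union := Set.ncard_union_le (Subtype.val '' (f ⁻¹' D')) S
  rw [Set.ncard_image_of_injective _ Subtype.val_injective] at h_union
  rw [liftCover_eq_image_preimage_union]
  omega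

open SimpleGraph

lemma exists_reachable_liftCover_of_reachable
    (hf_adj : ∀ a b, G'.Adj (f a) (f b) → G.Adj a b)
    (hf_ne : ∀ a, f a ≠ w) (hadj_w : ∀ a, G'.Adj (f a) w → ∃ c ∈ S, G.Adj a c)
    (hadj_range : ∀ a y, G'.Adj (f a) y → y = w ∨ y ∈ Set.range f) (hw : w ∈ D')
    {a : {v // v ∉ S}} (ha : f a ∈ D') (hr : (G'.induce D').Reachable ⟨f a, ha⟩ ⟨w, hw⟩) :
    ∃ c, ∃ hc : c ∈ S, (G.induce (liftCover S f D')).Reachable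
      ⟨a, Or.inl ⟨a.2, ha⟩⟩ ⟨c, Or.inr hc⟩ := by
  obtain ⟨p⟩ := hr
  generalize hx : (⟨f a, ha⟩ : D') = x at p
  generalize hy : (⟨w, hw⟩ : D') = y at p
  induction p generalizing a with
  | nil =>
    subst hx
    exact (hf_ne a (congrArg Subtype.val hy).symm).elim
  | @cons x z y hxz p ih =>
    subst hx
    have hxz : G'.Adj (f a) z := hxz
    rcases hadj_range a z hxz with hz | ⟨b, hb⟩
    · obtain ⟨c, hc, hac⟩ := hadj_w a (hz ▸ hxz)
      exact ⟨c, hc, Adj.reachable (show G.Adj a c from hac)⟩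
    · obtain ⟨c, hc, hbc⟩ := ih (a := b) (hb ▸ z.2) (Subtype.ext hb) hy
      refine ⟨c, hc, Reachable.trans ?_ hbc⟩
      exact Adj.reachable (hf_adj a b (hb ▸ hxz))

lemma connected_induce_liftCover (hS : (G.induce S).Connected)
    (hf_adj : ∀ a b, G'.Adj (f a) (f b) → G.Adj a b) (hf_ne : ∀ a, f a ≠ w)
    (hadj_w : ∀ a, G'.Adj (f a) w → ∃ c ∈ S, G.Adj a c)
    (hadj_range : ∀ a y, G'.Adj (f a) y → y = w ∨ y ∈ Set.range f) (hw : w ∈ D')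
    (hD' : (G'.induce D').Connected) : (G.induce (liftCover S f D')).Connected := by
  obtain ⟨⟨s, hs⟩⟩ := hS.nonempty
  have hS_le : S ⊆ liftCover S f D' := Set.subset_union_right
  have reach_s : ∀ c (hc : c ∈ S),
      (G.induce (liftCover S f D')).Reachable ⟨c, hS_le hc⟩ ⟨s, hS_le hs⟩ :=
    fun c hc => (hS.preconnected ⟨c, hc⟩ ⟨s, hs⟩).map (induceHomOfLE G hS_le).toHom
  rw [connected_iff_exists_forall_reachable]
  refine ⟨⟨s, hS_le hs⟩, ?_⟩
  rintro ⟨v, ⟨hv, hvD⟩ | hv⟩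
  · obtain ⟨c, hc, hr⟩ := exists_reachable_liftCover_of_reachable (a := ⟨v, hv⟩) hf_adj hf_ne
      hadj_w hadj_range hw hvD (hD'.preconnected _ _)
    exact (hr.trans (reach_s c hc)).symm
  · exact (reach_s v hv).symm

end LiftCover

lemma SimpleGraph.connected_induce_insert_neighborSet {V : Type*} (G : SimpleGraph V)
    (u : V) :
    (G.induce (insert u (G.neighborSet u))).Connected := by
  rw [connected_iff_exists_forall_reachable]
  refine ⟨⟨u, Set.mem_insert _ _⟩, ?_⟩
  rintro ⟨v, rfl | huv⟩
  · rfl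
  · exact Adj.reachable (show G.Adj u v from huv)

theorem stmt_9_general {V W : Type*} [Fintype V] [Fintype W]
    (G : SimpleGraph V) (u : V)
    (G' : SimpleGraph (Option ({v : V // v ∉ insert u (G.neighborSet u)} ⊕ W)))
    (hold : ∀ a b : {v : V // v ∉ insert u (G.neighborSet u)},
      G'.Adj (some (Sum.inl a)) (some (Sum.inl b)) ↔ G.Adj ↑a ↑b)
    (hw : ∀ a : {v : V // v ∉ insert u (G.neighborSet u)},
      G'.Adj (some (Sum.inl a)) none ↔ ∃ c : V, G.Adj u c ∧ G.Adj ↑a c)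
    (hW2 : ∀ (x : W) (z : {v : V // v ∉ insert u (G.neighborSet u)} ⊕ W),
      ¬ G'.Adj (some (Sum.inr x)) (some z))
    (D' : Set (Option ({v : V // v ∉ insert u (G.neighborSet u)} ⊕ W)))
    (hwD' : none ∈ D')
    (hD' : IsConnectedVertexCover G' D') :
    IsConnectedVertexCover G
        ({v : V | ∃ h : v ∉ insert u (G.neighborSet u), some (Sum.inl ⟨v, h⟩) ∈ D'}
          ∪ insert u (G.neighborSet u)) ∧
      ({v : V | ∃ h : v ∉ insert u (G.neighborSet u), some (Sum.inl ⟨v, h⟩) ∈ D'}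
          ∪ insert u (G.neighborSet u)).ncard
        ≤ D'.ncard + (G.neighborSet u).ncard := by
  show IsConnectedVertexCover G (liftCover _ (some ∘ Sum.inl) D') ∧
    (liftCover _ (some ∘ Sum.inl) D').ncard ≤ _
  refine ⟨⟨isVertexCover_liftCover (fun a b => (hold a b).2) hD'.1,
    connected_induce_liftCover (G.connected_induce_insert_neighborSet u)
      (fun a b => (hold a b).1) (fun _ => Option.some_ne_none _) ?adj_none ?range hwD' hD'.2⟩,
    ?card⟩
  case adj_none =>
    intro a h
    obtain ⟨c, huc, hac⟩ := (hw a).1 h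
    exact ⟨c, Set.mem_insert_of_mem _ huc, hac⟩
  case range =>
    rintro a (_ | _ | x) h
    · exact Or.inl rfl
    · exact Or.inr ⟨_, rfl⟩
    · exact (hW2 x _ h.symm).elim
  case card =>
    have hlift := ncard_liftCover_add_one_le (Option.some_injective _ |>.comp Sum.inl_injective)
      (fun _ => Option.some_ne_none _) hwD' (Set.toFinite D')
    have hstar := Set.ncard_insert_le u (G.neighborSet u)
    omega

/-- Let G be a finite simple graph and u a vertex with N_G(u) ≠ ∅. Let G' be
obtained from G by deleting the closed neighbourhood N_G[u], adding a new vertex w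
(modelled as `none`) adjacent exactly to those remaining vertices having a G-neighbour in
N_G(u), and adding a (possibly empty) set W of new vertices each adjacent only to w. If
D' is a connected vertex cover of G' with w ∈ D', then
D := (D' ∖ ({w} ∪ W)) ∪ N_G[u] is a connected vertex cover of G with
|D| ≤ |D'| + |N_G(u)|. -/
theorem stmt_9 {V W : Type*} [Fintype V] [DecidableEq V] [Fintype W] [DecidableEq W]
    (G : SimpleGraph V) (u : V) (hu : (G.neighborSet u).Nonempty)
    (G' : SimpleGraph (Option ({v : V // v ∉ insert u (G.neighborSet u)} ⊕ W)))
    (hold : ∀ a b : {v : V // v ∉ insert u (G.neighborSet u)},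
      G'.Adj (some (Sum.inl a)) (some (Sum.inl b)) ↔ G.Adj ↑a ↑b)
    (hw : ∀ a : {v : V // v ∉ insert u (G.neighborSet u)},
      G'.Adj (some (Sum.inl a)) none ↔ ∃ c : V, G.Adj u c ∧ G.Adj ↑a c)
    (hW1 : ∀ x : W, G'.Adj (some (Sum.inr x)) none)
    (hW2 : ∀ (x : W) (z : {v : V // v ∉ insert u (G.neighborSet u)} ⊕ W),
      ¬ G'.Adj (some (Sum.inr x)) (some z))
    (D' : Set (Option ({v : V // v ∉ insert u (G.neighborSet u)} ⊕ W)))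
    (hwD' : none ∈ D')
    (hD' : IsConnectedVertexCover G' D') :
    IsConnectedVertexCover G
        ({v : V | ∃ h : v ∉ insert u (G.neighborSet u), some (Sum.inl ⟨v, h⟩) ∈ D'}
          ∪ insert u (G.neighborSet u)) ∧
      ({v : V | ∃ h : v ∉ insert u (G.neighborSet u), some (Sum.inl ⟨v, h⟩) ∈ D'}
          ∪ insert u (G.neighborSet u)).ncard
        ≤ D'.ncard + (G.neighborSet u).ncard :=
  stmt_9_general G u G' hold hw hW2 D' hwD' hD'
end

section
/- Let G be a finite simple connected graph with |V(G)| ≥ 2, let k ≥ 1 and d ≥ 2 be integers, and let S ⊆ V(G) with |S| ≤ k be such that V(G) ∖ S can be partitioned into a clique C with |C| ≤ d − 1 and an independent set I. Define B = {v ∈ V(G) : deg_G(v) ≥ 2k + d} and I_B = {v ∈ V(G) ∖ B : N_G(v) ⊆ B}. Suppose that (i) every vertex of I_B ∖ S has degree at most d − 1 in G, and (ii) for every set B' ⊆ B there are at most 2k + d vertices v ∈ I_B ∖ S with N_G(v) = B'. Then |V(G)| ≤ k + 3(2k + d)^2 + d · (2k + d)^d. -/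
/-!
Every vertex outside `X = S ∪ C` lies in the independent set `I`, so its neighbours lie in `X`,
which has fewer than `m = 2k + d` vertices. Such a vertex either has only neighbours of degree at
least `m`, and then lies in `I_B ∖ S`, or it is adjacent to one of the at most `|X|` vertices of `X`
of degree less than `m`, which have fewer than `m²` neighbours in total. The neighbourhoods of the
vertices of `I_B ∖ S` are subsets of `X` of size less than `d`, of which there are at most
`d · m^(d-1)`, and each of them is shared by at most `m` vertices.
-/

open Finset

theorem Finset.card_filter_powerset_card_lt_le {α : Type*} [DecidableEq α] {B : Finset α}
    {n : ℕ} (d : ℕ) (hB : #B ≤ n) (hn : 0 < n) : #{s ∈ B.powerset | #s < d} ≤ d * n ^ (d - 1) :=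
  calc #{s ∈ B.powerset | #s < d} ≤ #((range d).biUnion B.powersetCard) :=
        card_le_card fun s hs => by
          rw [mem_filter, mem_powerset] at hs
          exact mem_biUnion.2 ⟨#s, mem_range.2 hs.2, mem_powersetCard.2 ⟨hs.1, rfl⟩⟩
    _ ≤ #(range d) * n ^ (d - 1) := card_biUnion_le_card_mul _ _ _ fun i hi => by
        have hid : i < d := mem_range.1 hi
        calc #(B.powersetCard i) = (#B).choose i := card_powersetCard i B
          _ ≤ #B ^ i := Nat.choose_le_pow _ _
          _ ≤ n ^ i := Nat.pow_le_pow_left hB i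
          _ ≤ n ^ (d - 1) := Nat.pow_le_pow_right hn (by omega)
    _ = d * n ^ (d - 1) := by rw [card_range]

namespace SimpleGraph

variable {V : Type*} (G : SimpleGraph V) [G.LocallyFinite]

theorem card_le_of_neighborFinset_subset [DecidableEq V] {T B : Finset V} {d n t : ℕ}
    (hB : #B ≤ n) (hn : 0 < n)
    (hsub : ∀ v ∈ T, G.neighborFinset v ⊆ B) (hdeg : ∀ v ∈ T, G.degree v < d)
    (htwins : ∀ v ∈ T, #{u ∈ T | G.neighborFinset u = G.neighborFinset v} ≤ t) :
    #T ≤ t * (d * n ^ (d - 1)) :=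
  calc #T ≤ t * #(T.image (G.neighborFinset ·)) := card_le_mul_card_image T t fun _ hs => by
        obtain ⟨v, hv, rfl⟩ := mem_image.1 hs
        exact htwins v hv
    _ ≤ t * #{s ∈ B.powerset | #s < d} := Nat.mul_le_mul_left _ <| card_le_card fun _ hs => by
        obtain ⟨v, hv, rfl⟩ := mem_image.1 hs
        simpa [hsub v hv] using hdeg v hv
    _ ≤ t * (d * n ^ (d - 1)) :=
        Nat.mul_le_mul_left _ (card_filter_powerset_card_lt_le d hB hn)

theorem card_biUnion_neighborFinset_le [DecidableEq V] {W : Finset V} {m : ℕ}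
    (h : ∀ w ∈ W, G.degree w ≤ m) :
    #(W.biUnion (G.neighborFinset ·)) ≤ #W * m :=
  card_biUnion_le_card_mul _ _ _ fun w hw => (G.card_neighborFinset_eq_degree w).trans_le (h w hw)

section IndepComplement

variable {G} {X : Finset V} {I : Set V}

theorem neighborFinset_subset_of_isIndepSet (hI : G.IsIndepSet I) (hX : ∀ v ∉ X, v ∈ I) {v : V}
    (hv : v ∈ I) : G.neighborFinset v ⊆ X := fun w hw => by
  by_contra hwX
  exact hI hv (hX w hwX) (G.ne_of_adj ((G.mem_neighborFinset v w).1 hw))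
    ((G.mem_neighborFinset v w).1 hw)

theorem degree_le_card_of_isIndepSet (hI : G.IsIndepSet I) (hX : ∀ v ∉ X, v ∈ I) {v : V}
    (hv : v ∈ I) : G.degree v ≤ #X := by
  rw [← card_neighborFinset_eq_degree]
  exact card_le_card (neighborFinset_subset_of_isIndepSet hI hX hv)

theorem mem_biUnion_neighborFinset_of_isIndepSet [DecidableEq V] (hI : G.IsIndepSet I)
    (hX : ∀ v ∉ X, v ∈ I) {m : ℕ} {v : V} (hv : v ∈ I) (hlow : ¬ ∀ w, G.Adj v w → m ≤ G.degree w) :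
    v ∈ {w ∈ X | G.degree w < m}.biUnion (G.neighborFinset ·) := by
  push Not at hlow
  obtain ⟨w, hvw, hw⟩ := hlow
  have hwX : w ∈ X :=
    neighborFinset_subset_of_isIndepSet hI hX hv ((G.mem_neighborFinset v w).2 hvw)
  exact mem_biUnion.2 ⟨w, mem_filter.2 ⟨hwX, hw⟩, (G.mem_neighborFinset w v).2 hvw.symm⟩

theorem card_le_of_isIndepSet [Fintype V] [DecidableEq V] [DecidableRel G.Adj]
    (hI : G.IsIndepSet I) (hX : ∀ v ∉ X, v ∈ I) (m : ℕ) :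
    Fintype.card V ≤ #X + #{v ∈ Xᶜ | ∀ w, G.Adj v w → m ≤ G.degree w} + #X * m := by
  set T₂ := {w ∈ X | G.degree w < m}.biUnion (G.neighborFinset ·)
  have hcover : Xᶜ ⊆ {v ∈ Xᶜ | ∀ w, G.Adj v w → m ≤ G.degree w} ∪ T₂ := fun v hv => by
    by_cases hhigh : ∀ w, G.Adj v w → m ≤ G.degree w
    · exact mem_union_left _ (mem_filter.2 ⟨hv, hhigh⟩)
    · exact mem_union_right _
        (mem_biUnion_neighborFinset_of_isIndepSet hI hX (hX v (mem_compl.1 hv)) hhigh)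
  have hT₂ : #T₂ ≤ #X * m :=
    (G.card_biUnion_neighborFinset_le fun w hw => (mem_filter.1 hw).2.le).trans
      (Nat.mul_le_mul_right _ (card_filter_le _ _))
  have hcompl := (card_le_card hcover).trans (card_union_le _ _)
  rw [card_compl] at hcompl
  omega

end IndepComplement

end SimpleGraph

open SimpleGraph

theorem stmt_11_general {V : Type*} [Fintype V]
    (G : SimpleGraph V) [DecidableRel G.Adj]
    (k d : ℕ) (hd : 2 ≤ d)
    (S C I : Set V) (hS : S.ncard ≤ k)
    (hpart : C ∪ I = Sᶜ)
    (hCcard : C.ncard ≤ d - 1)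
    (hI : ∀ u ∈ I, ∀ v ∈ I, ¬ G.Adj u v)
    (hdeg : ∀ v : V, v ∉ S → G.degree v < 2 * k + d →
      (∀ w : V, G.Adj v w → 2 * k + d ≤ G.degree w) → G.degree v ≤ d - 1)
    (htwins : ∀ B' : Set V, B' ⊆ {v : V | 2 * k + d ≤ G.degree v} →
      {v : V | v ∉ S ∧ G.degree v < 2 * k + d ∧
        (∀ w : V, G.Adj v w → 2 * k + d ≤ G.degree w) ∧
        G.neighborSet v = B'}.ncard ≤ 2 * k + d) :
    Fintype.card V ≤ k + 3 * (2 * k + d) ^ 2 + d * (2 * k + d) ^ d := by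
  classical
  set m := 2 * k + d
  set X := S.toFinset ∪ C.toFinset
  have hXcard : #X ≤ k + (d - 1) :=
    calc #X ≤ #S.toFinset + #C.toFinset := card_union_le _ _
      _ = S.ncard + C.ncard := by simp only [Set.ncard_eq_toFinset_card']
      _ ≤ k + (d - 1) := by omega
  have hX : ∀ v ∉ X, v ∈ I := fun v hv => by
    have : v ∈ C ∪ I := hpart ▸ fun hvS => hv (by simp [X, hvS])
    exact this.resolve_left fun hvC => hv (by simp [X, hvC])
  have hIndep : G.IsIndepSet I := fun u hu v hv _ => hI u hu v hv
  set T := {v ∈ Xᶜ | ∀ w, G.Adj v w → m ≤ G.degree w}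
  have hT : ∀ v ∈ T, v ∉ S ∧ G.degree v < m ∧ ∀ w, G.Adj v w → m ≤ G.degree w := fun v hv => by
    have hvX : v ∉ X := mem_compl.1 (mem_filter.1 hv).1
    refine ⟨fun hvS => hvX (by simp [X, hvS]), ?_, (mem_filter.1 hv).2⟩
    have := degree_le_card_of_isIndepSet hIndep hX (hX v hvX)
    omega
  have hTcard : #T ≤ m * (d * m ^ (d - 1)) := by
    refine G.card_le_of_neighborFinset_subset (B := X) (by omega) (by omega)
      (fun v hv => neighborFinset_subset_of_isIndepSet hIndep hX
        (hX v (mem_compl.1 (mem_filter.1 hv).1)))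
      (fun v hv => ?_) (fun v hv => ?_)
    · obtain ⟨hvS, hvm, hhigh⟩ := hT v hv
      have := hdeg v hvS hvm hhigh
      omega
    · calc #{u ∈ T | G.neighborFinset u = G.neighborFinset v}
          ≤ {u | u ∉ S ∧ G.degree u < m ∧ (∀ w, G.Adj u w → m ≤ G.degree w) ∧
              G.neighborSet u = G.neighborSet v}.ncard := by
            rw [← Set.ncard_coe_finset]
            refine Set.ncard_le_ncard (fun u hu => ?_) (Set.toFinite _)
            obtain ⟨huT, hN⟩ := mem_filter.1 hu
            obtain ⟨huS, hum, hhigh⟩ := hT u huT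
            exact ⟨huS, hum, hhigh, by rw [← coe_neighborFinset, hN, coe_neighborFinset]⟩
        _ ≤ m := htwins _ fun w hw => (hT v hv).2.2 w hw
  have hcardV : Fintype.card V ≤ #X + #T + #X * m := G.card_le_of_isIndepSet hIndep hX m
  have hpow : m * (d * m ^ (d - 1)) = d * m ^ d := by
    rw [mul_left_comm, ← pow_succ', Nat.sub_add_cancel (by omega)]
  have hXm : #X * m ≤ m * m := Nat.mul_le_mul_right _ (by omega)
  have hdm : d - 1 ≤ m * m := (by omega : d - 1 ≤ m).trans (Nat.le_mul_self m)
  rw [sq]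
  omega

/-- Let G be a finite simple connected graph with |V(G)| ≥ 2, let k ≥ 1 and
d ≥ 2 be integers, and let S ⊆ V(G) with |S| ≤ k be such that V(G) ∖ S can be partitioned
into a clique C with |C| ≤ d − 1 and an independent set I. Define
B = {v : deg_G(v) ≥ 2k + d} and I_B = {v ∉ B : N_G(v) ⊆ B}. Suppose (i) every vertex of
I_B ∖ S has degree at most d − 1 in G, and (ii) for every set B' ⊆ B there are at most
2k + d vertices v ∈ I_B ∖ S with N_G(v) = B'. Then |V(G)| ≤ k + 3(2k+d)² + d·(2k+d)^d. -/
theorem stmt_11 {V : Type*} [Fintype V] [DecidableEq V]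
    (G : SimpleGraph V) [DecidableRel G.Adj] (hconn : G.Connected)
    (hV : 2 ≤ Fintype.card V) (k d : ℕ) (hk : 1 ≤ k) (hd : 2 ≤ d)
    (S C I : Set V) (hS : S.ncard ≤ k)
    (hpart : C ∪ I = Sᶜ) (hdisj : Disjoint C I)
    (hC : G.IsClique C) (hCcard : C.ncard ≤ d - 1)
    (hI : ∀ u ∈ I, ∀ v ∈ I, ¬ G.Adj u v)
    (hdeg : ∀ v : V, v ∉ S → G.degree v < 2 * k + d →
      (∀ w : V, G.Adj v w → 2 * k + d ≤ G.degree w) → G.degree v ≤ d - 1)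
    (htwins : ∀ B' : Set V, B' ⊆ {v : V | 2 * k + d ≤ G.degree v} →
      {v : V | v ∉ S ∧ G.degree v < 2 * k + d ∧
        (∀ w : V, G.Adj v w → 2 * k + d ≤ G.degree w) ∧
        G.neighborSet v = B'}.ncard ≤ 2 * k + d) :
    Fintype.card V ≤ k + 3 * (2 * k + d) ^ 2 + d * (2 * k + d) ^ d :=
  stmt_11_general G k d hd S C I hS hpart hCcard hI hdeg htwins
end

section
/- Let G be a finite simple graph with vertex set V and let k ≥ 1 be an integer. Let G' be the graph with vertex set (V × {1, …, k}) ∪ {x, y}, where x and y are two new vertices, in which two distinct vertices (v, i) and (u, j) are adjacent if and only if i = j, or u = v, or {u, v} is an edge of G; the vertex x is adjacent to every other vertex of G'; and y is adjacent only to x. Then G has an independent set of size k if and only if G' has an independent set S' of size k + 1 such that V(G') ∖ S' is a connected vertex cover of G'. -/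
/-!
An independent set of `G'` with at least two vertices avoids the universal vertex `x`, so one of
size `k + 1` consists of `y` and `k` vertices `(v, i)` whose first coordinates are distinct and
pairwise non-adjacent in `G` and whose second coordinates are distinct. Conversely, an
independent set `{v₁, …, v_k}` of `G` yields `{(v₁, 1), …, (v_k, k), y}`. The complement of an
independent set is always a vertex cover, and here it is connected because it contains `x`.
-/

open Finset Function

namespace SimpleGraph

variable {W : Type*} {G : SimpleGraph W} {x : W}

theorem connected_induce_of_forall_adj {X : Set W} (hxX : x ∈ X)
    (hx : ∀ z ∈ X, z ≠ x → G.Adj x z) : (G.induce X).Connected := by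
  rw [connected_iff_exists_forall_reachable]
  refine ⟨⟨x, hxX⟩, fun ⟨z, hz⟩ => ?_⟩
  by_cases hzx : z = x
  · subst hzx
    rfl
  · exact Adj.reachable (induce_adj.2 (hx z hz hzx))

theorem notMem_of_forall_adj {S : Finset W} (hS : ∀ a ∈ S, ∀ b ∈ S, ¬G.Adj a b)
    (hcard : 1 < #S) (hx : ∀ z, z ≠ x → G.Adj x z) : x ∉ S := by
  intro hxS
  obtain ⟨b, hb, hbx⟩ := exists_mem_ne hcard x
  exact hS x hxS b hb (hx b hbx)

end SimpleGraph

theorem isVertexCover_compl {W : Type*} {G : SimpleGraph W} {S : Set W}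
    (hS : ∀ a ∈ S, ∀ b ∈ S, ¬G.Adj a b) : IsVertexCover G Sᶜ := by
  intro a b hab
  by_contra! h
  exact hS a (not_not.1 h.1) b (not_not.1 h.2) hab

theorem isConnectedVertexCover_compl {W : Type*} {G : SimpleGraph W} {S : Set W} {x : W}
    (hS : ∀ a ∈ S, ∀ b ∈ S, ¬G.Adj a b) (hxS : x ∉ S) (hx : ∀ z, z ≠ x → G.Adj x z) :
    IsConnectedVertexCover G Sᶜ :=
  ⟨isVertexCover_compl hS,
    SimpleGraph.connected_induce_of_forall_adj hxS fun z _ hzx => hx z hzx⟩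

theorem Finset.exists_graph_of_card_eq {V : Type*} {k : ℕ} {s : Finset V} (hs : #s = k) :
    ∃ T : Finset (V × Fin k), #T = k ∧ Set.InjOn Prod.fst (T : Set (V × Fin k)) ∧
      Set.InjOn Prod.snd (T : Set (V × Fin k)) ∧ ∀ p ∈ T, p.1 ∈ s := by
  set e := s.equivFinOfCardEq hs
  let g : Fin k ↪ V × Fin k := ⟨fun i => (e.symm i, i), fun i j h => congrArg Prod.snd h⟩
  refine ⟨univ.map g, by simp, ?_, ?_, fun _ hp => ?_⟩
  · rw [coe_map, coe_univ, Set.image_univ]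
    exact Injective.injOn_range (f := g) fun i j h => e.symm.injective (Subtype.ext h)
  · rw [coe_map, coe_univ, Set.image_univ]
    exact Injective.injOn_range (f := g) fun i j h => h
  · obtain ⟨i, -, rfl⟩ := mem_map.1 hp
    exact (e.symm i).2

section Gadget

variable {V : Type*} {G : SimpleGraph V} {k : ℕ} {G' : SimpleGraph ((V × Fin k) ⊕ Bool)}

theorem forall_not_adj_inl_iff
    (hinl : ∀ p q : V × Fin k, p ≠ q →
      (G'.Adj (Sum.inl p) (Sum.inl q) ↔ p.2 = q.2 ∨ p.1 = q.1 ∨ G.Adj p.1 q.1))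
    (T : Finset (V × Fin k)) :
    (∀ p ∈ T, ∀ q ∈ T, ¬G'.Adj (Sum.inl p) (Sum.inl q)) ↔
      Set.InjOn Prod.fst (T : Set (V × Fin k)) ∧ Set.InjOn Prod.snd (T : Set (V × Fin k)) ∧
        ∀ p ∈ T, ∀ q ∈ T, ¬G.Adj p.1 q.1 := by
  constructor
  · intro hT
    refine ⟨fun p hp q hq h => ?_, fun p hp q hq h => ?_, fun p hp q hq h => ?_⟩
    · by_contra hpq
      exact hT p hp q hq ((hinl p q hpq).2 (Or.inr (Or.inl h)))
    · by_contra hpq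
      exact hT p hp q hq ((hinl p q hpq).2 (Or.inl h))
    · have hpq : p ≠ q := fun hpq => h.ne (congrArg Prod.fst hpq)
      exact hT p hp q hq ((hinl p q hpq).2 (Or.inr (Or.inr h)))
  · rintro ⟨hfst, hsnd, hind⟩ p hp q hq hadj
    have hpq : p ≠ q := fun h => G'.irrefl (h ▸ hadj)
    rcases (hinl p q hpq).1 hadj with h | h | h
    · exact hpq (hsnd hp hq h)
    · exact hpq (hfst hp hq h)
    · exact hind p hp q hq h

theorem forall_not_adj_disjSum_false
    (hy : ∀ p : V × Fin k, ¬ G'.Adj (Sum.inr false) (Sum.inl p)) {T : Finset (V × Fin k)}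
    (hT : ∀ p ∈ T, ∀ q ∈ T, ¬G'.Adj (Sum.inl p) (Sum.inl q)) :
    ∀ a ∈ T.disjSum {false}, ∀ b ∈ T.disjSum {false}, ¬G'.Adj a b := by
  rintro (p | _) ha (q | _) hb hab
  · exact hT p (by simpa using ha) q (by simpa using hb) hab
  · obtain rfl : _ = false := by simpa using hb
    exact hy p hab.symm
  · obtain rfl : _ = false := by simpa using ha
    exact hy q hab
  · obtain rfl : _ = false := by simpa using ha
    obtain rfl : _ = false := by simpa using hb
    exact G'.irrefl hab

theorem exists_indep_card_of_indep_card_succ [DecidableEq V]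
    (hinl : ∀ p q : V × Fin k, p ≠ q →
      (G'.Adj (Sum.inl p) (Sum.inl q) ↔ p.2 = q.2 ∨ p.1 = q.1 ∨ G.Adj p.1 q.1))
    {S' : Finset ((V × Fin k) ⊕ Bool)} (hS' : ∀ a ∈ S', ∀ b ∈ S', ¬G'.Adj a b)
    (hcard : #S' = k + 1) (hx : Sum.inr true ∉ S') :
    ∃ s : Finset V, #s = k ∧ ∀ u ∈ s, ∀ v ∈ s, ¬G.Adj u v := by
  obtain ⟨hfst, hsnd, hind⟩ := (forall_not_adj_inl_iff hinl S'.toLeft).1 fun p hp q hq =>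
    hS' _ (mem_toLeft.1 hp) _ (mem_toLeft.1 hq)
  have hright : #S'.toRight ≤ 1 := card_le_one.2 fun
    | true, h, _, _ => absurd (mem_toRight.1 h) hx
    | false, _, true, h => absurd (mem_toRight.1 h) hx
    | false, _, false, _ => rfl
  have hle : #S'.toLeft ≤ k :=
    (card_le_card_of_injOn Prod.snd (fun _ _ => mem_univ _) hsnd).trans_eq (card_fin k)
  have hsplit := S'.card_toLeft_add_card_toRight
  refine ⟨S'.toLeft.image Prod.fst, by rw [card_image_of_injOn hfst]; omega, ?_⟩
  simp only [mem_image]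
  rintro _ ⟨p, hp, rfl⟩ _ ⟨q, hq, rfl⟩
  exact hind p hp q hq

end Gadget

theorem stmt_12_general {V : Type*} [DecidableEq V]
    (G : SimpleGraph V) (k : ℕ) (hk : 1 ≤ k)
    (G' : SimpleGraph ((V × Fin k) ⊕ Bool))
    (hinl : ∀ p q : V × Fin k, p ≠ q →
      (G'.Adj (Sum.inl p) (Sum.inl q) ↔ p.2 = q.2 ∨ p.1 = q.1 ∨ G.Adj p.1 q.1))
    (hx : ∀ z : (V × Fin k) ⊕ Bool, z ≠ Sum.inr true → G'.Adj (Sum.inr true) z)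
    (hy : ∀ p : V × Fin k, ¬ G'.Adj (Sum.inr false) (Sum.inl p)) :
    (∃ s : Finset V, s.card = k ∧ ∀ u ∈ s, ∀ v ∈ s, ¬ G.Adj u v) ↔
      (∃ S' : Finset ((V × Fin k) ⊕ Bool), S'.card = k + 1 ∧
        (∀ a ∈ S', ∀ b ∈ S', ¬ G'.Adj a b) ∧
        IsConnectedVertexCover G' ((↑S' : Set ((V × Fin k) ⊕ Bool))ᶜ)) := by
  constructor
  · rintro ⟨s, hs, hind⟩
    obtain ⟨T, hT, hfst, hsnd, hTs⟩ := exists_graph_of_card_eq hs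
    have hS' := forall_not_adj_disjSum_false hy <| (forall_not_adj_inl_iff hinl T).2
      ⟨hfst, hsnd, fun p hp q hq => hind _ (hTs p hp) _ (hTs q hq)⟩
    exact ⟨T.disjSum {false}, by simp [hT], hS',
      isConnectedVertexCover_compl hS' (by simp) hx⟩
  · rintro ⟨S', hcard, hS', -⟩
    exact exists_indep_card_of_indep_card_succ hinl hS' hcard
      (SimpleGraph.notMem_of_forall_adj hS' (by omega) hx)

/-- Let G be a finite simple graph and k ≥ 1. Let G' be the graph on
(V × {1,…,k}) ∪ {x, y} (x = `Sum.inr true`, y = `Sum.inr false`) in which distinct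
vertices (v,i) and (u,j) are adjacent iff i = j, or u = v, or {u,v} ∈ E(G); x is adjacent
to every other vertex; and y is adjacent only to x. Then G has an independent set of size
k iff G' has an independent set S' of size k + 1 whose complement is a connected vertex
cover of G'. -/
theorem stmt_12 {V : Type*} [Fintype V] [DecidableEq V]
    (G : SimpleGraph V) (k : ℕ) (hk : 1 ≤ k)
    (G' : SimpleGraph ((V × Fin k) ⊕ Bool))
    (hinl : ∀ p q : V × Fin k, p ≠ q →
      (G'.Adj (Sum.inl p) (Sum.inl q) ↔ p.2 = q.2 ∨ p.1 = q.1 ∨ G.Adj p.1 q.1))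
    (hx : ∀ z : (V × Fin k) ⊕ Bool, z ≠ Sum.inr true → G'.Adj (Sum.inr true) z)
    (hy : ∀ p : V × Fin k, ¬ G'.Adj (Sum.inr false) (Sum.inl p)) :
    (∃ s : Finset V, s.card = k ∧ ∀ u ∈ s, ∀ v ∈ s, ¬ G.Adj u v) ↔
      (∃ S' : Finset ((V × Fin k) ⊕ Bool), S'.card = k + 1 ∧
        (∀ a ∈ S', ∀ b ∈ S', ¬ G'.Adj a b) ∧
        IsConnectedVertexCover G' ((↑S' : Set ((V × Fin k) ⊕ Bool))ᶜ)) :=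
  stmt_12_general G k hk G' hinl hx hy
end

section
/- Let G be a finite simple connected graph with at least one edge, let k ≥ 1 be an integer, and let S ⊆ V(G) with |S| ≤ k be such that every connected component of G − S is a clique. Let C_1, …, C_t be the connected components of G − S having at least 2 vertices, and let c = Σ_{i=1}^{t} (|C_i| − 1). Then G has a connected vertex cover of size at most 2k − 1 + c. -/
/-!
Delete one vertex from every component of `G - S`, choosing it different from a fixed neighbour
of `S` whenever the component has another vertex. The deleted vertices lie in distinct components,
so they are pairwise non-adjacent and the remaining `|S| + c` vertices form a vertex cover. Since
the components are cliques, every remaining vertex outside `S` reaches `S` inside the cover, so the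
cover induces at most `|S| ≤ k` components (one if `S = ∅`, when `G` is complete). A vertex cover of
a connected graph is made connected by adding one vertex per merge of two components, i.e. at most
`k - 1` vertices.
-/

lemma Function.exists_rightInverse_ne {W β : Type*} {f : W → β} {u : β → W}
    (hu : Function.RightInverse u f) :
    ∃ v : β → W, Function.RightInverse v f ∧ ∀ x, x ≠ v (f x) → v (f x) ≠ u (f x) := by
  have : ∀ b, ∃ y, f y = b ∧ ∀ x, f x = b → x ≠ y → y ≠ u b := by
    intro b
    by_cases h : ∃ x, f x = b ∧ x ≠ u b
    · obtain ⟨x, hx, hxu⟩ := h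
      exact ⟨x, hx, fun _ _ _ => hxu⟩
    · push Not at h
      exact ⟨u b, hu b, fun x hx hxu => absurd (h x hx) hxu⟩
  choose v hv hvu using this
  exact ⟨v, hv, fun x hx => hvu _ x rfl hx⟩

namespace SimpleGraph

variable {V : Type*} {G : SimpleGraph V}

/-- `IsVertexCover` is definitionally Mathlib's `SimpleGraph.IsVertexCover`, whose API is used
throughout. -/
lemma isConnectedVertexCover_iff {T : Set V} :
    IsConnectedVertexCover G T ↔ G.IsVertexCover T ∧ (G.induce T).Connected :=
  Iff.rfl

lemma IsVertexCover.nonempty {X : Set V} (hX : G.IsVertexCover X) (hE : G.edgeSet.Nonempty) :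
    X.Nonempty := by
  obtain ⟨⟨a, b⟩, hab⟩ := hE
  exact (hX hab).elim (⟨a, ·⟩) (⟨b, ·⟩)

lemma ConnectedComponent.finsum_ncard_supp_sub_one_add_card [Finite V] :
    ∑ᶠ K : G.ConnectedComponent, (K.supp.ncard - 1) + Nat.card G.ConnectedComponent =
      Nat.card V := by
  have := Fintype.ofFinite G.ConnectedComponent
  have hV : Nat.card V = ∑ K : G.ConnectedComponent, K.supp.ncard := by
    rw [← Nat.card_congr (Equiv.sigmaFiberEquiv G.connectedComponentMk), Nat.card_sigma]
    rfl
  rw [finsum_eq_sum_of_fintype, hV, Nat.card_eq_fintype_card, Fintype.card_eq_sum_ones,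
    ← Finset.sum_add_distrib]
  exact Finset.sum_congr rfl fun K _ => Nat.sub_add_cancel ((Set.ncard_pos).2 K.nonempty_supp)

lemma Reachable.induce_of_forall_mem {A : Set V} (hA : ∀ x, x ∈ A) {x y : V}
    (h : G.Reachable x y) : (G.induce A).Reachable ⟨x, hA x⟩ ⟨y, hA y⟩ :=
  h.map ({ toFun := fun x => ⟨x, hA x⟩, map_rel' := id } : G →g G.induce A)

lemma exists_adj_of_induce_compl (hG : G.Preconnected) {S : Set V} (hS : S.Nonempty)
    (K : (G.induce Sᶜ).ConnectedComponent) :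
    ∃ x : ↥Sᶜ, (G.induce Sᶜ).connectedComponentMk x = K ∧ ∃ s ∈ S, G.Adj x s := by
  obtain ⟨x, rfl⟩ := K.exists_rep
  obtain ⟨s, hs⟩ := hS
  set C : Set V := {y | ∃ hy : y ∈ Sᶜ, (G.induce Sᶜ).Reachable x ⟨y, hy⟩}
  obtain ⟨d, -, ⟨hfst, hreach⟩, hsnd⟩ :=
    (hG x s).some.exists_boundary_dart C ⟨x.2, .refl _⟩ (fun ⟨h, _⟩ => h hs)
  refine ⟨⟨d.fst, hfst⟩, (ConnectedComponent.sound hreach).symm, d.snd, ?_, d.adj⟩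
  by_contra h
  exact hsnd ⟨h, hreach.trans (Adj.reachable (G := G.induce Sᶜ) d.adj)⟩

lemma isVertexCover_compl_image_of_rightInverse {A : Set V}
    {v : (G.induce A).ConnectedComponent → A}
    (hv : Function.RightInverse v (G.induce A).connectedComponentMk) :
    G.IsVertexCover (Subtype.val '' Set.range v)ᶜ := by
  rw [isVertexCover_compl]
  rintro _ ⟨_, ⟨K₁, rfl⟩, rfl⟩ _ ⟨_, ⟨K₂, rfl⟩, rfl⟩ hne hadj
  have hK : K₁ = K₂ := by
    rw [← hv K₁, ← hv K₂]
    exact ConnectedComponent.connectedComponentMk_eq_of_adj (G := G.induce A) hadj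
  exact hne (hK ▸ rfl)

def MeetsEveryComponent (G : SimpleGraph V) (X R : Set V) : Prop :=
  ∀ x : X, ∃ r : X, (r : V) ∈ R ∧ (G.induce X).Reachable r x

lemma meetsEveryComponent_singleton (hG : ∀ x y, x ≠ y → G.Adj x y) {X : Set V} {x₀ : V}
    (hx₀ : x₀ ∈ X) : G.MeetsEveryComponent X {x₀} := by
  refine fun x => ⟨⟨x₀, hx₀⟩, rfl, ?_⟩
  by_cases h : x₀ = x
  · rw [show (⟨x₀, hx₀⟩ : ↥X) = x from Subtype.ext h]
  · exact Adj.reachable (G := G.induce X) (hG _ _ h)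

lemma MeetsEveryComponent.insert_diff_singleton {X R : Set V} (h : G.MeetsEveryComponent X R)
    {w : V} {a b r₁ r₂ : X} (hwa : G.Adj w a) (hwb : G.Adj w b) (hr₁ : (r₁ : V) ∈ R)
    (hne : (r₁ : V) ≠ r₂) (h₁ : (G.induce X).Reachable r₁ a)
    (h₂ : (G.induce X).Reachable r₂ b) :
    G.MeetsEveryComponent (insert w X) (R \ {(r₂ : V)}) := by
  let ι : G.induce X →g G.induce (insert w X) := (G.induceHomOfLE (Set.subset_insert w X)).toHom
  let w' : ↥(insert w X) := ⟨w, Set.mem_insert w X⟩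
  have h₁w : (G.induce _).Reachable (ι r₁) w' :=
    (h₁.map ι).trans (Adj.reachable (G := G.induce _) hwa.symm)
  have h₂w : (G.induce _).Reachable (ι r₂) w' :=
    (h₂.map ι).trans (Adj.reachable (G := G.induce _) hwb.symm)
  have hr₁' : (ι r₁ : V) ∈ R \ {(r₂ : V)} := ⟨hr₁, hne⟩
  rintro ⟨y, hy⟩
  rcases Set.mem_insert_iff.mp hy with rfl | hyX
  · exact ⟨ι r₁, hr₁', h₁w⟩
  obtain ⟨r, hr, hry⟩ := h ⟨y, hyX⟩
  by_cases hr₂ : r = r₂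
  · subst hr₂
    exact ⟨ι r₁, hr₁', h₁w.trans (h₂w.symm.trans (hry.map ι))⟩
  · exact ⟨ι r, ⟨hr, fun h => hr₂ (Subtype.ext h)⟩, hry.map ι⟩

/-- Follow a walk from `r` to `b` until it leaves the vertices lying in, or adjacent to, the
component of `r`. -/
lemma IsVertexCover.exists_adj_adj_of_not_reachable (hG : G.Preconnected) {X : Set V}
    (hX : G.IsVertexCover X) {r b : X} (hrb : ¬ (G.induce X).Reachable r b) :
    ∃ w ∉ X, ∃ a b' : X, G.Adj w a ∧ G.Adj w b' ∧
      (G.induce X).Reachable r a ∧ ¬ (G.induce X).Reachable r b' := by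
  set N : Set V := {y | ∃ a : X, (G.induce X).Reachable r a ∧ (y = a ∨ G.Adj y a)}
  have hbN : (b : V) ∉ N := by
    rintro ⟨a, hra, hba | hba⟩
    · exact hrb (Subtype.ext hba ▸ hra)
    · exact hrb (hra.trans (Adj.reachable (G := G.induce X) hba.symm))
  obtain ⟨d, -, ⟨a, hra, hfst⟩, hsnd⟩ :=
    (hG r b).some.exists_boundary_dart N ⟨r, .refl _, .inl rfl⟩ hbN
  rcases hfst with hfst | hadj
  · exact (hsnd ⟨a, hra, .inr (hfst ▸ d.adj.symm)⟩).elim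
  have hw : d.fst ∉ X := fun hw =>
    hsnd ⟨⟨d.fst, hw⟩, hra.trans (Adj.reachable (G := G.induce X) hadj.symm), .inr d.adj.symm⟩
  exact ⟨d.fst, hw, a, ⟨d.snd, (hX d.adj).resolve_left hw⟩, hadj, d.adj, hra,
    fun h => hsnd ⟨_, h, .inl rfl⟩⟩

/-- Each added vertex merges two components of the cover, and is charged to a root of `R`. -/
theorem exists_isConnectedVertexCover_ncard_le (hG : G.Preconnected) {X : Set V}
    (hX : G.IsVertexCover X) (hXne : X.Nonempty) (R : Finset V)
    (hR : G.MeetsEveryComponent X R) :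
    ∃ T, IsConnectedVertexCover G T ∧ T.ncard ≤ X.ncard + R.card - 1 := by
  classical
  induction R using Finset.strongInduction generalizing X with
  | H R ih =>
  obtain ⟨x₀, hx₀⟩ := hXne
  obtain ⟨r₁, hr₁, -⟩ := hR ⟨x₀, hx₀⟩
  have hRpos : 0 < R.card := Finset.card_pos.mpr ⟨_, hr₁⟩
  by_cases hconn : ∀ x : X, (G.induce X).Reachable r₁ x
  · refine ⟨X, isConnectedVertexCover_iff.2 ⟨hX, ?_⟩, by omega⟩
    exact (connected_iff_exists_forall_reachable _).2 ⟨r₁, hconn⟩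
  push Not at hconn
  obtain ⟨b, hb⟩ := hconn
  obtain ⟨w, hwX, a, b', hwa, hwb', ha, hb'⟩ := hX.exists_adj_adj_of_not_reachable hG hb
  obtain ⟨r₂, hr₂, h₂⟩ := hR b'
  have hne : (r₁ : V) ≠ r₂ := fun h => hb' (Subtype.ext h ▸ h₂)
  obtain ⟨T, hT, hTcard⟩ := ih (R.erase r₂) (Finset.erase_ssubset hr₂)
    (hX.subset (Set.subset_insert w X)) (Set.insert_nonempty w X)
    (by rw [Finset.coe_erase]; exact hR.insert_diff_singleton hwa hwb' hr₁ hne ha h₂)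
  have := Set.ncard_insert_le w X
  have := Finset.card_erase_of_mem hr₂
  exact ⟨T, hT, by omega⟩

lemma meetsEveryComponent_compl_image {S : Set V}
    (hcluster : ∀ a b : ↥Sᶜ, (G.induce Sᶜ).Reachable a b → a ≠ b → (G.induce Sᶜ).Adj a b)
    {u v : (G.induce Sᶜ).ConnectedComponent → ↥Sᶜ}
    (hu : Function.RightInverse u (G.induce Sᶜ).connectedComponentMk)
    (huS : ∀ K, ∃ s ∈ S, G.Adj (u K) s)
    (hv : Function.RightInverse v (G.induce Sᶜ).connectedComponentMk)
    (hvu : ∀ x, x ≠ v ((G.induce Sᶜ).connectedComponentMk x) →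
      v ((G.induce Sᶜ).connectedComponentMk x) ≠ u ((G.induce Sᶜ).connectedComponentMk x)) :
    G.MeetsEveryComponent (Subtype.val '' Set.range v)ᶜ S := by
  set X := (Subtype.val '' Set.range v)ᶜ
  rintro ⟨x, hx⟩
  by_cases hxS : x ∈ S
  · exact ⟨⟨x, hx⟩, hxS, .refl _⟩
  set K := (G.induce Sᶜ).connectedComponentMk ⟨x, hxS⟩
  have hxv : (⟨x, hxS⟩ : ↥Sᶜ) ≠ v K := fun h => hx ⟨v K, ⟨K, rfl⟩, congrArg Subtype.val h.symm⟩
  have huX : (u K : V) ∈ X := by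
    rintro ⟨_, ⟨K', rfl⟩, h⟩
    have hK' : K' = K := by rw [← hv K', Subtype.ext h, hu K]
    subst hK'
    exact hvu _ hxv (Subtype.ext h)
  obtain ⟨s, hs, hus⟩ := huS K
  have hsX : s ∈ X := by
    rintro ⟨y, -, rfl⟩
    exact y.2 hs
  refine ⟨⟨s, hsX⟩, hs,
    (show (G.induce X).Adj ⟨s, hsX⟩ ⟨u K, huX⟩ from hus.symm).reachable.trans ?_⟩
  by_cases hxu : (u K : V) = x
  · rw [show (⟨u K, huX⟩ : ↥X) = ⟨x, hx⟩ from Subtype.ext hxu]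
  · exact Adj.reachable (G := G.induce X) (hcluster _ _ (ConnectedComponent.exact (hu K))
      (fun h => hxu (congrArg Subtype.val h)) : G.Adj (u K) x)

theorem exists_isVertexCover_of_forall_reachable_adj [Finite V] (hG : G.Preconnected)
    {S : Set V}
    (hcluster : ∀ a b : ↥Sᶜ, (G.induce Sᶜ).Reachable a b → a ≠ b → (G.induce Sᶜ).Adj a b) :
    ∃ X : Set V, G.IsVertexCover X ∧
      X.ncard = S.ncard + ∑ᶠ K : (G.induce Sᶜ).ConnectedComponent, (K.supp.ncard - 1) ∧
      (S.Nonempty → G.MeetsEveryComponent X S) := by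
  set H := G.induce Sᶜ
  obtain ⟨u, hu, huS⟩ : ∃ u : H.ConnectedComponent → ↥Sᶜ,
      Function.RightInverse u H.connectedComponentMk ∧
        (S.Nonempty → ∀ K, ∃ s ∈ S, G.Adj (u K) s) := by
    by_cases hS : S.Nonempty
    · choose u hu huS using exists_adj_of_induce_compl hG hS
      exact ⟨u, hu, fun _ => huS⟩
    · choose u hu using fun K : H.ConnectedComponent => K.exists_rep
      exact ⟨u, hu, fun h => (hS h).elim⟩
  obtain ⟨v, hv, hvu⟩ := Function.exists_rightInverse_ne hu
  refine ⟨_, isVertexCover_compl_image_of_rightInverse hv, ?_,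
    fun hS => meetsEveryComponent_compl_image hcluster hu (huS hS) hv hvu⟩
  have hSc := ConnectedComponent.finsum_ncard_supp_sub_one_add_card (G := H)
  rw [Nat.card_coe_set_eq] at hSc
  rw [Set.ncard_compl, Set.ncard_image_of_injective _ Subtype.val_injective,
    Set.ncard_range_of_injective hv.injective, ← Set.ncard_add_ncard_compl S]
  omega

end SimpleGraph

open SimpleGraph

theorem stmt_14_general {V : Type*} [Fintype V]
    (G : SimpleGraph V) (hconn : G.Connected) (hedge : G.edgeSet.Nonempty)
    (k : ℕ) (hk : 1 ≤ k) (S : Set V) (hS : S.ncard ≤ k)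
    (hcluster : ∀ a b : ↥(Sᶜ), (G.induce Sᶜ).Reachable a b → a ≠ b →
      (G.induce Sᶜ).Adj a b)
    (c : ℕ)
    (hc : c = ∑ᶠ comp : (G.induce Sᶜ).ConnectedComponent, (comp.supp.ncard - 1)) :
    ∃ T : Set V, IsConnectedVertexCover G T ∧ T.ncard ≤ 2 * k - 1 + c := by
  obtain ⟨X, hX, hXcard, hXS⟩ :=
    exists_isVertexCover_of_forall_reachable_adj hconn.preconnected hcluster
  obtain ⟨x₀, hx₀⟩ := hX.nonempty hedge
  obtain ⟨R, hRk, hR⟩ : ∃ R : Finset V, R.card ≤ k ∧ G.MeetsEveryComponent X R := by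
    rcases S.eq_empty_or_nonempty with rfl | hSne
    · have hcomplete : ∀ x y, x ≠ y → G.Adj x y := fun x y hxy =>
        hcluster _ _ ((hconn.preconnected x y).induce_of_forall_mem Set.notMem_empty)
          (fun h => hxy (congrArg Subtype.val h))
      exact ⟨{x₀}, by simpa using hk, by simpa using meetsEveryComponent_singleton hcomplete hx₀⟩
    · exact ⟨S.toFinite.toFinset, by rwa [← Set.ncard_eq_toFinset_card S],
        by simpa using hXS hSne⟩
  obtain ⟨T, hT, hTcard⟩ :=
    exists_isConnectedVertexCover_ncard_le hconn.preconnected hX ⟨x₀, hx₀⟩ R hR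
  exact ⟨T, hT, by omega⟩

/-- Let G be a finite simple connected graph with at least one edge, k ≥ 1,
and S ⊆ V(G) with |S| ≤ k such that every connected component of G − S is a clique (any
two distinct reachable vertices of G − S are adjacent). With c = Σ (|C_i| − 1) over the
components C_i of G − S having at least 2 vertices (components of size 1 contribute 0 to
the sum below), G has a connected vertex cover of size at most 2k − 1 + c. -/
theorem stmt_14 {V : Type*} [Fintype V] [DecidableEq V]
    (G : SimpleGraph V) (hconn : G.Connected) (hedge : G.edgeSet.Nonempty)
    (k : ℕ) (hk : 1 ≤ k) (S : Set V) (hS : S.ncard ≤ k)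
    (hcluster : ∀ a b : ↥(Sᶜ), (G.induce Sᶜ).Reachable a b → a ≠ b →
      (G.induce Sᶜ).Adj a b)
    (c : ℕ)
    (hc : c = ∑ᶠ comp : (G.induce Sᶜ).ConnectedComponent, (comp.supp.ncard - 1)) :
    ∃ T : Set V, IsConnectedVertexCover G T ∧ T.ncard ≤ 2 * k - 1 + c :=
  stmt_14_general G hconn hedge k hk S hS hcluster c hc
end

section
/- Let G be a finite simple connected graph, let k ≥ 1 be an integer, and let S ⊆ V(G) with |S| ≤ k be such that every connected component of G − S is a clique. Suppose x ∈ S has at least 2k neighbours v such that v ∉ S and {v} is a connected component of G − S (i.e., v is an isolated vertex of G − S). Then every minimum-size connected vertex cover of G contains x. -/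
/-
Suppose `x ∉ T`. Then `T` contains the set `A` of neighbours of `x` that are isolated in `G - S`,
and every neighbour of a vertex of `A` lies in `S`. Fix a breadth-first spanning tree of
`G[T ∪ S]` rooted at `x`. The children of a vertex of `A` lie in `S \ {x}`, so at most `|S| - 1`
vertices of `A` are inner vertices of the tree. Removing the other vertices of `A`, which are
leaves, from `T ∪ S` leaves a connected vertex cover of size at most
`|T| + |S| - |A| + |S| - 1 < |T|`, since `|A| ≥ 2k ≥ 2|S|`.
-/

open Set

section

variable {V : Type*} {G : SimpleGraph V}

theorem SimpleGraph.Connected.exists_adj_dist_lt_s15 (hG : G.Connected) {r v : V} (hv : v ≠ r) :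
    ∃ u, G.Adj u v ∧ G.dist r u < G.dist r v := by
  obtain ⟨p, hp⟩ := hG.exists_walk_length_eq_dist v r
  obtain ⟨u, hadj, q, rfl⟩ := p.exists_eq_cons_of_ne hv
  refine ⟨u, hadj.symm, ?_⟩
  calc G.dist r u = G.dist u r := SimpleGraph.dist_comm
    _ ≤ q.length := G.dist_le q
    _ < (SimpleGraph.Walk.cons hadj q).length := by simp
    _ = G.dist r v := hp.trans SimpleGraph.dist_comm

def IsParentMap (G : SimpleGraph V) (W : Set V) (r : V) (p : V → V) (d : V → ℕ) : Prop :=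
  ∀ v ∈ W, v ≠ r → p v ∈ W ∧ G.Adj (p v) v ∧ d (p v) < d v

namespace IsParentMap

variable {W X : Set V} {r : V} {p : V → V} {d : V → ℕ}

theorem reachable (hp : IsParentMap G W r p d) (hr : r ∈ W) {v : V} (hv : v ∈ W) :
    (G.induce W).Reachable ⟨r, hr⟩ ⟨v, hv⟩ := by
  induction hn : d v using Nat.strong_induction_on generalizing v with
  | _ n ih =>
    by_cases hvr : v = r
    · subst hvr
      rfl
    · obtain ⟨hpW, hadj, hlt⟩ := hp v hv hvr
      exact (ih _ (hn ▸ hlt) hpW rfl).trans (SimpleGraph.Adj.reachable (G := G.induce W) hadj)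

theorem induce_connected (hp : IsParentMap G W r p d) (hr : r ∈ W) : (G.induce W).Connected :=
  G.induce_connected_of_patches r hr fun hv => ⟨W, subset_rfl, hr, hv, hp.reachable hr hv⟩

theorem restrict (hp : IsParentMap G W r p d) (hXW : X ⊆ W) (hX : ∀ v ∈ X, v ≠ r → p v ∈ X) :
    IsParentMap G X r p d :=
  fun v hv hvr => ⟨hX v hv hvr, (hp v (hXW hv) hvr).2⟩

end IsParentMap

theorem exists_isParentMap {W : Set V} {r : V} (hW : (G.induce W).Connected) (hr : r ∈ W) :
    ∃ p d, IsParentMap G W r p d := by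
  classical
  let d : V → ℕ := fun v => if hv : v ∈ W then (G.induce W).dist ⟨r, hr⟩ ⟨v, hv⟩ else 0
  have hparent : ∀ v, ∃ u, v ∈ W → v ≠ r → u ∈ W ∧ G.Adj u v ∧ d u < d v := by
    intro v
    by_cases hv : v ∈ W ∧ v ≠ r
    · obtain ⟨u, hadj, hlt⟩ := hW.exists_adj_dist_lt_s15 (r := ⟨r, hr⟩) (v := ⟨v, hv.1⟩)
        fun h => hv.2 (congrArg Subtype.val h)
      refine ⟨u, fun _ _ => ⟨u.2, hadj, ?_⟩⟩
      simpa [d, hv.1, u.2] using hlt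
    · exact ⟨v, fun h1 h2 => absurd ⟨h1, h2⟩ hv⟩
  choose p hp using hparent
  exact ⟨p, d, fun v hv hvr => hp v hv hvr⟩

theorem IsConnectedVertexCover.induce_connected_of_subset {T U : Set V} (hG : G.Connected)
    (hT : IsConnectedVertexCover G T) (hTU : T ⊆ U) : (G.induce U).Connected := by
  obtain ⟨⟨a, ha⟩⟩ := hT.2.nonempty
  refine G.induce_connected_of_patches a (hTU ha) fun {v} hv => ?_
  by_cases hvT : v ∈ T
  · exact ⟨T, hTU, ha, hvT, hT.2.preconnected _ _⟩
  · obtain ⟨q⟩ := hG.preconnected v a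
    obtain ⟨w, hvw, -⟩ := q.exists_eq_cons_of_ne fun h : v = a => hvT (h ▸ ha)
    have hwT : w ∈ T := (hT.1 hvw).resolve_left hvT
    have hpatch : (G.induce (T ∪ {w, v})).Connected :=
      G.induce_union_connected hT.2.preconnected
        (G.induce_pair_connected_of_adj hvw.symm).preconnected
        ⟨w, hwT, mem_insert w {v}⟩
    refine ⟨T ∪ {w, v}, union_subset hTU ?_, Or.inl ha, Or.inr (mem_insert_of_mem w rfl),
      hpatch.preconnected _ _⟩
    exact insert_subset (hTU hwT) (singleton_subset_iff.2 hv)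

theorem exists_isConnectedVertexCover_ncard_add_lt [Finite V] {T S A : Set V} {r : V}
    (hW : (G.induce (T ∪ S)).Connected) (hT : IsVertexCover G T) (hr : r ∈ S)
    (hAT : A ⊆ T) (hAS : Disjoint A S) (hNA : ∀ a ∈ A, ∀ w, G.Adj a w → w ∈ S) :
    ∃ T', IsConnectedVertexCover G T' ∧ T'.ncard + A.ncard < (T ∪ S).ncard + S.ncard := by
  set W := T ∪ S
  obtain ⟨p, d, hp⟩ := exists_isParentMap hW (subset_union_right hr)
  set T' := (W \ A) ∪ p '' (S \ {r})
  have hSW : S ⊆ W \ A := fun v hv => ⟨Or.inr hv, hAS.notMem_of_mem_right hv⟩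
  have hT'W : T' ⊆ W :=
    union_subset sdiff_subset (image_subset_iff.2 fun v hv => (hp v (Or.inr hv.1) hv.2).1)
  have hclosed : ∀ v ∈ T', v ≠ r → p v ∈ T' := by
    intro v hv hvr
    obtain ⟨hpW, hadj, -⟩ := hp v (hT'W hv) hvr
    by_cases hpA : p v ∈ A
    · exact Or.inr ⟨v, ⟨hNA _ hpA v hadj, hvr⟩, rfl⟩
    · exact Or.inl ⟨hpW, hpA⟩
  have hcover_of_mem : ∀ u v, G.Adj u v → u ∈ T → u ∈ T' ∨ v ∈ T' := by
    intro u v huv hu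
    by_cases huA : u ∈ A
    · exact Or.inr (Or.inl (hSW (hNA u huA v huv)))
    · exact Or.inl (Or.inl ⟨Or.inl hu, huA⟩)
  have hcover : IsVertexCover G T' := fun u v huv =>
    (hT huv).elim (hcover_of_mem u v huv) fun hv => (hcover_of_mem v u huv.symm hv).symm
  have hconn : (G.induce T').Connected :=
    (hp.restrict hT'W hclosed).induce_connected (Or.inl (hSW hr))
  refine ⟨T', ⟨hcover, hconn⟩, ?_⟩
  have hunion : T'.ncard ≤ (W \ A).ncard + (p '' (S \ {r})).ncard := ncard_union_le _ _
  have hdiff : (W \ A).ncard + A.ncard = W.ncard :=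
    ncard_sdiff_add_ncard_of_subset (hAT.trans subset_union_left)
  have himage : (p '' (S \ {r})).ncard + 1 ≤ S.ncard :=
    (Nat.add_le_add_right (ncard_image_le (toFinite _)) 1).trans_eq
      (ncard_sdiff_singleton_add_one hr)
  omega

end

theorem stmt_15_general {V : Type*} [Fintype V]
    (G : SimpleGraph V) (hconn : G.Connected)
    (k : ℕ) (S : Set V) (hS : S.ncard ≤ k)
    (x : V) (hx : x ∈ S)
    (hmany : 2 * k ≤
      {v : V | v ∉ S ∧ G.Adj x v ∧ ∀ w : V, w ∉ S → ¬ G.Adj v w}.ncard)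
    (T : Set V) (hT : IsConnectedVertexCover G T)
    (hmin : ∀ T' : Set V, IsConnectedVertexCover G T' → T.ncard ≤ T'.ncard) :
    x ∈ T := by
  by_contra hxT
  set A := {v : V | v ∉ S ∧ G.Adj x v ∧ ∀ w : V, w ∉ S → ¬ G.Adj v w}
  have hAT : A ⊆ T := fun v hv => (hT.1 hv.2.1).resolve_left hxT
  have hNA : ∀ a ∈ A, ∀ w, G.Adj a w → w ∈ S := fun a ha w haw =>
    by_contra fun hw => ha.2.2 w hw haw
  obtain ⟨T', hT', hcard⟩ := exists_isConnectedVertexCover_ncard_add_lt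
    (hT.induce_connected_of_subset hconn subset_union_left) hT.1 hx hAT
    (disjoint_left.2 fun _ hv => hv.1) hNA
  have hTT' := hmin T' hT'
  have hunion := ncard_union_le T S
  omega

/-- Let G be a finite simple connected graph, k ≥ 1, and S ⊆ V(G) with
|S| ≤ k such that every connected component of G − S is a clique. Suppose x ∈ S has at
least 2k neighbours v with v ∉ S that are isolated vertices of G − S (i.e. {v} is a
connected component of G − S). Then every minimum-size connected vertex cover of G
contains x. -/
theorem stmt_15 {V : Type*} [Fintype V] [DecidableEq V]
    (G : SimpleGraph V) (hconn : G.Connected)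
    (k : ℕ) (hk : 1 ≤ k) (S : Set V) (hS : S.ncard ≤ k)
    (hcluster : ∀ a b : ↥(Sᶜ), (G.induce Sᶜ).Reachable a b → a ≠ b →
      (G.induce Sᶜ).Adj a b)
    (x : V) (hx : x ∈ S)
    (hmany : 2 * k ≤
      {v : V | v ∉ S ∧ G.Adj x v ∧ ∀ w : V, w ∉ S → ¬ G.Adj v w}.ncard)
    (T : Set V) (hT : IsConnectedVertexCover G T)
    (hmin : ∀ T' : Set V, IsConnectedVertexCover G T' → T.ncard ≤ T'.ncard) :
    x ∈ T :=
  stmt_15_general G hconn k S hS x hx hmany T hT hmin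
end

section
/- Let G be a finite simple connected graph with at least one edge, let k ≥ 1 be an integer, let ε > 0 be a real number, and let S ⊆ V(G) with |S| ≤ k be such that every connected component of G − S is a clique. Let t be the number of connected components of G − S having at least 2 vertices. If ε · t ≥ 2k, then G has a connected vertex cover of size at most (1 + ε) · OPT, where OPT is the minimum size of a connected vertex cover of G. -/
/-!
Take a minimum connected vertex cover `D`. Since `G` is connected and has an edge, every vertex
of `S` has a neighbour, which lies in `D` unless the vertex itself does; so `D ∪ S` is again a
connected vertex cover, of size at most `OPT + k`. Each of the `t` components of `G - S` with
two vertices is a clique, hence contains an edge, hence meets `D`; the components being disjoint,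
`t ≤ OPT`, and so `k ≤ ε t / 2 ≤ ε OPT`.
-/

namespace SimpleGraph

variable {V : Type*} {G : SimpleGraph V}

lemma Connected.exists_adj_of_edgeSet_nonempty (hconn : G.Connected) (hedge : G.edgeSet.Nonempty)
    (v : V) : ∃ w, G.Adj v w := by
  obtain ⟨a, b, hab⟩ := G.ne_bot_iff_exists_adj.mp (G.edgeSet_nonempty.mp hedge)
  have : Nontrivial V := nontrivial_of_ne a b hab.ne
  exact hconn.preconnected.exists_adj_of_nontrivial v

lemma connected_induce_union_of_forall_adj {s t : Set V} (hs : (G.induce s).Connected)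
    (ht : ∀ v ∈ t, ∃ w ∈ s, G.Adj v w) : (G.induce (s ∪ t)).Connected := by
  obtain ⟨⟨u, hu⟩⟩ := hs.nonempty
  refine G.induce_connected_of_patches u (Or.inl hu) fun {v} hv => ?_
  by_cases hvs : v ∈ s
  · exact ⟨s, Set.subset_union_left, hu, hvs, hs.preconnected _ _⟩
  · obtain ⟨w, hws, hvw⟩ := ht v (hv.resolve_left hvs)
    have hpatch : (G.induce (s ∪ {w, v})).Connected :=
      G.connected_induce_union hs.preconnected (G.induce_pair_connected_of_adj hvw.symm).preconnected
        hws (by simp) hvw.symm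
    refine ⟨s ∪ {w, v}, ?_, Or.inl hu, Or.inr (by simp), hpatch.preconnected _ _⟩
    rintro x (hx | rfl | rfl)
    exacts [Or.inl hx, Or.inl hws, hv]

end SimpleGraph

section VertexCover

variable {V : Type*} {G : SimpleGraph V} {D : Set V}

lemma IsVertexCover.mono_s16 {D' : Set V} (hD : IsVertexCover G D) (h : D ⊆ D') :
    IsVertexCover G D' :=
  fun _ _ huv => (hD huv).imp (@h _) (@h _)

lemma IsConnectedVertexCover.union (hD : IsConnectedVertexCover G D) {S : Set V}
    (hS : ∀ v ∈ S, ∃ w, G.Adj v w) : IsConnectedVertexCover G (D ∪ S) := by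
  refine ⟨hD.1.mono_s16 Set.subset_union_left, ?_⟩
  rw [← Set.union_sdiff_self]
  refine SimpleGraph.connected_induce_union_of_forall_adj hD.2 fun v hv => ?_
  obtain ⟨w, hvw⟩ := hS v hv.1
  exact ⟨w, (hD.1 hvw).resolve_left hv.2, hvw⟩

lemma IsVertexCover.exists_mem_supp (hD : IsVertexCover G D) {s : Set V}
    {c : (G.induce s).ConnectedComponent} {a b : s} (ha : a ∈ c.supp) (hb : b ∈ c.supp)
    (hab : (G.induce s).Adj a b) : ∃ v ∈ c.supp, (v : V) ∈ D := by
  rcases hD hab with h | h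
  exacts [⟨a, ha, h⟩, ⟨b, hb, h⟩]

lemma IsVertexCover.card_nontrivial_components_le [Finite V] (hD : IsVertexCover G D)
    {S : Set V} (hcluster : ∀ a b : ↥(Sᶜ), (G.induce Sᶜ).Reachable a b → a ≠ b →
      (G.induce Sᶜ).Adj a b) :
    Nat.card {c : (G.induce Sᶜ).ConnectedComponent // 2 ≤ c.supp.ncard} ≤ D.ncard := by
  have hmeet : ∀ c : {c : (G.induce Sᶜ).ConnectedComponent // 2 ≤ c.supp.ncard},
      ∃ v ∈ c.1.supp, (v : V) ∈ D := by
    rintro ⟨c, hc⟩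
    obtain ⟨a, b, ha, hb, hab⟩ := (Set.one_lt_ncard_iff).mp hc
    have hreach : (G.induce Sᶜ).Reachable a b :=
      SimpleGraph.ConnectedComponent.exact (ha.trans hb.symm)
    exact hD.exists_mem_supp ha hb (hcluster a b hreach hab)
  choose f hf hfD using hmeet
  have hinj : Function.Injective fun c => (⟨f c, hfD c⟩ : D) := by
    intro c c' h
    have hf' : f c = f c' := Subtype.ext (by simpa using h)
    exact Subtype.ext ((hf c).symm.trans (hf' ▸ hf c'))
  exact (Nat.card_le_card_of_injective _ hinj).trans_eq (Nat.card_coe_set_eq D)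

end VertexCover

theorem stmt_16_general {V : Type*} [Fintype V]
    (G : SimpleGraph V) (hconn : G.Connected) (hedge : G.edgeSet.Nonempty)
    (k : ℕ) (ε : ℝ) (hε : 0 < ε)
    (S : Set V) (hS : S.ncard ≤ k)
    (hcluster : ∀ a b : ↥(Sᶜ), (G.induce Sᶜ).Reachable a b → a ≠ b →
      (G.induce Sᶜ).Adj a b)
    (t : ℕ)
    (ht : t = Nat.card {comp : (G.induce Sᶜ).ConnectedComponent // 2 ≤ comp.supp.ncard})
    (hεt : (2 * k : ℝ) ≤ ε * (t : ℝ)) :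
    ∃ T : Set V, IsConnectedVertexCover G T ∧
      (T.ncard : ℝ) ≤ (1 + ε) *
        ((sInf {n : ℕ | ∃ D : Set V, IsConnectedVertexCover G D ∧ D.ncard = n} : ℕ) : ℝ) := by
  have huniv : IsConnectedVertexCover G Set.univ :=
    ⟨fun _ _ _ => Or.inl trivial, (G.induceUnivIso).connected_iff.mpr hconn⟩
  obtain ⟨D, hD, hDopt⟩ : sInf {n : ℕ | ∃ D : Set V, IsConnectedVertexCover G D ∧ D.ncard = n} ∈
      {n : ℕ | ∃ D : Set V, IsConnectedVertexCover G D ∧ D.ncard = n} :=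
    Nat.sInf_mem ⟨_, Set.univ, huniv, rfl⟩
  rw [← hDopt]
  refine ⟨D ∪ S, hD.union fun v _ => hconn.exists_adj_of_edgeSet_nonempty hedge v, ?_⟩
  have htD : (t : ℝ) ≤ D.ncard := by
    exact_mod_cast ht ▸ hD.1.card_nontrivial_components_le hcluster
  have hunion : ((D ∪ S).ncard : ℝ) ≤ D.ncard + k := by
    exact_mod_cast (Set.ncard_union_le D S).trans (by omega)
  have hkD : (k : ℝ) ≤ ε * D.ncard := by
    linarith [mul_le_mul_of_nonneg_left htD hε.le, (k.cast_nonneg : (0 : ℝ) ≤ k)]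
  linarith

/-- Let G be a finite simple connected graph with at least one edge, k ≥ 1
an integer, ε > 0 a real number, and S ⊆ V(G) with |S| ≤ k such that every connected
component of G − S is a clique. Let t be the number of connected components of G − S
having at least 2 vertices. If ε·t ≥ 2k, then G has a connected vertex cover of size at
most (1 + ε)·OPT, where OPT is the minimum size of a connected vertex cover of G. -/
theorem stmt_16 {V : Type*} [Fintype V] [DecidableEq V]
    (G : SimpleGraph V) (hconn : G.Connected) (hedge : G.edgeSet.Nonempty)
    (k : ℕ) (hk : 1 ≤ k) (ε : ℝ) (hε : 0 < ε)
    (S : Set V) (hS : S.ncard ≤ k)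
    (hcluster : ∀ a b : ↥(Sᶜ), (G.induce Sᶜ).Reachable a b → a ≠ b →
      (G.induce Sᶜ).Adj a b)
    (t : ℕ)
    (ht : t = Nat.card {comp : (G.induce Sᶜ).ConnectedComponent // 2 ≤ comp.supp.ncard})
    (hεt : (2 * k : ℝ) ≤ ε * (t : ℝ)) :
    ∃ T : Set V, IsConnectedVertexCover G T ∧
      (T.ncard : ℝ) ≤ (1 + ε) *
        ((sInf {n : ℕ | ∃ D : Set V, IsConnectedVertexCover G D ∧ D.ncard = n} : ℕ) : ℝ) :=
  stmt_16_general G hconn hedge k ε hε S hS hcluster t ht hεt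
end
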